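/- arXiv:1705.08674 — 6 statements merged into one kernel-verified Lean document; each statement's English description precedes it below -/
import Mathlib

section
/- For every n ≥ 0 and every set X ⊆ {0,1}^n, the daisy cube Q_n(X) is a partial cube; that is, Q_n(X) is an isometric subgraph of the n-cube Q_n: for any two vertices u and v of Q_n(X), the distance between u and v in Q_n(X) equals their distance in Q_n (which is the Hamming distance, the number of coordinates in which u and v differ). -/
def Qcube (n : ℕ) : SimpleGraph (Fin n → Bool) where
  Adj u v := hammingDist u v = 1
  symm := ⟨fun u v h => by rwa [hammingDist_comm]⟩
  loopless := ⟨fun u h => by simp [hammingDist_self] at h⟩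

def daisySet {n : ℕ} (X : Set (Fin n → Bool)) : Set (Fin n → Bool) :=
  {u | ∃ x ∈ X, u ≤ x}

noncomputable def cubeCount {V : Type*} (G : SimpleGraph V) (k : ℕ) : ℕ :=
  Set.ncard {S : Set V | Nonempty (G.induce S ≃g Qcube k)}

noncomputable def distToSet {V : Type*} (G : SimpleGraph V) (u : V) (S : Set V) : ℕ :=
  sInf (G.dist u '' S)

noncomputable def distCubeCount {V : Type*} (G : SimpleGraph V) (u : V) (k d : ℕ) : ℕ :=
  Set.ncard {S : Set V | Nonempty (G.induce S ≃g Qcube k) ∧ distToSet G u S = d}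

noncomputable def wCount {V : Type*} (G : SimpleGraph V) (u : V) (d : ℕ) : ℕ :=
  Set.ncard {v : V | G.dist u v = d}

def interval {V : Type*} (G : SimpleGraph V) (u v : V) : Set V :=
  {w | G.dist u v = G.dist u w + G.dist w v}

/-! A daisy cube is the subgraph of the cube induced by a down-set `S`. For `u ≠ v` in `S`, flip a
coordinate where they differ: one where `u` is `1` and `v` is `0` if there is one (the result lies
below `u`), and otherwise `u ≤ v` and any differing coordinate will do (the result lies below `v`).
Either way we stay in `S` and get one step closer to `v` in Hamming distance, so `S` contains a walk
of length `hammingDist u v`. No walk of the cube is shorter, since each edge changes one coordinate. -/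

section HammingUpdate

open Function

variable {ι : Type*} {β : ι → Type*} [Fintype ι] [DecidableEq ι] [∀ i, DecidableEq (β i)]

lemma hammingDist_update_self (x : ∀ i, β i) {i : ι} {b : β i} (h : x i ≠ b) :
    hammingDist x (update x i b) = 1 := by
  rw [hammingDist, Finset.card_eq_one]
  refine ⟨i, Finset.ext fun j => ?_⟩
  by_cases hj : j = i
  · subst hj; simp [h]
  · simp [hj]

lemma hammingDist_update_add_one (x y : ∀ i, β i) {i : ι} (h : x i ≠ y i) :
    hammingDist (update x i (y i)) y + 1 = hammingDist x y := by
  have hfilter : Finset.univ.filter (fun j => x j ≠ y j) =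
      insert i (Finset.univ.filter fun j => update x i (y i) j ≠ y j) := by
    ext j
    by_cases hj : j = i
    · subst hj; simp [h]
    · simp [hj]
  rw [hammingDist, hammingDist, hfilter, Finset.card_insert_of_notMem (by simp)]

end HammingUpdate

namespace Qcube

variable {n : ℕ}

lemma isLowerSet_daisySet (X : Set (Fin n → Bool)) : IsLowerSet (daisySet X) :=
  (lowerClosure X).lower

lemma hammingDist_le_length {u v : Fin n → Bool} (p : (Qcube n).Walk u v) :
    hammingDist u v ≤ p.length := by
  induction p with
  | nil => simp
  | @cons u w v hadj _ ih =>
    have hstep : hammingDist u w = 1 := hadj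
    have := hammingDist_triangle u w v
    rw [SimpleGraph.Walk.length_cons]
    omega

lemma dist_eq_hammingDist_of_length_eq {W : Type*} {G : SimpleGraph W} (f : G →g Qcube n)
    {u v : W} (p : G.Walk u v) (hp : p.length = hammingDist (f u) (f v)) :
    G.dist u v = hammingDist (f u) (f v) := by
  refine le_antisymm (hp ▸ SimpleGraph.dist_le p) ?_
  obtain ⟨q, hq⟩ := SimpleGraph.Reachable.exists_walk_length_eq_dist ⟨p⟩
  simpa [hq] using hammingDist_le_length (q.map f)

lemma exists_update_mem_of_isLowerSet {S : Set (Fin n → Bool)} (hS : IsLowerSet S)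
    {u v : Fin n → Bool} (hu : u ∈ S) (hv : v ∈ S) (hne : u ≠ v) :
    ∃ i, u i ≠ v i ∧ Function.update u i (v i) ∈ S := by
  by_cases hdown : ∃ i, v i < u i
  · obtain ⟨i, hi⟩ := hdown
    exact ⟨i, hi.ne', hS (update_le_iff.2 ⟨hi.le, fun _ _ => le_rfl⟩) hu⟩
  · have hle : u ≤ v := fun i => not_lt.1 fun hi => hdown ⟨i, hi⟩
    obtain ⟨i, hi⟩ := Function.ne_iff.1 hne
    exact ⟨i, hi, hS (update_le_iff.2 ⟨le_rfl, fun j _ => hle j⟩) hv⟩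

lemma exists_walk_induce_length_eq_hammingDist {S : Set (Fin n → Bool)} (hS : IsLowerSet S)
    (u v : S) : ∃ p : ((Qcube n).induce S).Walk u v, p.length = hammingDist u.1 v.1 := by
  induction hd : hammingDist u.1 v.1 generalizing u with
  | zero =>
    obtain rfl : u = v := Subtype.ext (hammingDist_eq_zero.1 hd)
    exact ⟨.nil, rfl⟩
  | succ k ih =>
    have hne : u.1 ≠ v.1 := hammingDist_ne_zero.1 (by omega)
    obtain ⟨i, hi, hmem⟩ := exists_update_mem_of_isLowerSet hS u.2 v.2 hne
    have hadj : ((Qcube n).induce S).Adj u ⟨_, hmem⟩ := hammingDist_update_self u.1 hi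
    have hrest := hammingDist_update_add_one u.1 v.1 hi
    obtain ⟨p, hp⟩ := ih ⟨_, hmem⟩ (by dsimp only; omega)
    exact ⟨.cons hadj p, by simp [hp]⟩

end Qcube

theorem daisy_cube_is_partial_cube (n : ℕ) (X : Set (Fin n → Bool))
    (u v : ↥(daisySet X)) :
    ((Qcube n).induce (daisySet X)).dist u v = (Qcube n).dist u.1 v.1 ∧
    (Qcube n).dist u.1 v.1 = hammingDist u.1 v.1 := by
  obtain ⟨p, hp⟩ :=
    Qcube.exists_walk_induce_length_eq_hammingDist (Qcube.isLowerSet_daisySet X) u v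
  let incl := (SimpleGraph.Embedding.induce (G := Qcube n) (daisySet X)).toHom
  have h_induce := Qcube.dist_eq_hammingDist_of_length_eq incl p hp
  have h_cube := Qcube.dist_eq_hammingDist_of_length_eq SimpleGraph.Hom.id (p.map incl) (by simpa)
  exact ⟨h_induce.trans h_cube.symm, h_cube⟩
end

section
/- If Q is an induced subgraph of the Cartesian product G □ H of two graphs that is isomorphic to the d-cube Q_d, then the projection p_G(Q) of Q to G induces a subgraph isomorphic to Q_k for some 0 ≤ k ≤ d, the projection p_H(Q) induces a subgraph isomorphic to Q_{d−k}, and Q equals the Cartesian product p_G(Q) □ p_H(Q) (i.e. the vertex set of Q is exactly the product of the vertex sets of its two projections). -/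
/-!
Each edge of the cube is mapped either to a `G`-edge (constant `H`-coordinate) or to an `H`-edge
(constant `G`-coordinate) of `G □ H`. Injectivity forbids a square of the cube whose two opposite
edges have different types, so the type of an edge depends only on its direction. Splitting the
directions into horizontal ones `A` and vertical ones `B`, the `G`-coordinate of the image of `u`
depends only on `u|A` and the `H`-coordinate only on `u|B`. So the embedding is a product map
`Q_A □ Q_B → G □ H`; each factor of such an embedding is itself an embedding, and its image is the
product of its projections.
-/

open Function

section Hamming

variable {ι κ β : Type*} [Fintype ι] [Fintype κ] [DecidableEq β]

theorem hammingDist_eq_sum (u v : ι → β) :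
    hammingDist u v = ∑ i, if u i ≠ v i then 1 else 0 :=
  Finset.card_filter _ _

theorem hammingDist_comp_equiv (e : κ ≃ ι) (u v : ι → β) :
    hammingDist (u ∘ e) (v ∘ e) = hammingDist u v := by
  simp only [hammingDist_eq_sum, comp_apply, e.sum_comp (fun i => if u i ≠ v i then 1 else 0)]

theorem hammingDist_eq_add_subtype (p : ι → Prop) [DecidablePred p] (u v : ι → β) :
    hammingDist u v = hammingDist (fun i : {i // p i} => u i) (fun i : {i // p i} => v i) +
      hammingDist (fun i : {i // ¬p i} => u i) (fun i : {i // ¬p i} => v i) := by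
  simp only [hammingDist_eq_sum]
  exact (Fintype.sum_subtype_add_sum_subtype p _).symm

end Hamming

def flipCoord {ι : Type*} [DecidableEq ι] (u : ι → Bool) (i : ι) : ι → Bool :=
  update u i (!u i)

section FlipCoord

variable {ι : Type*} [DecidableEq ι] {u : ι → Bool} {i j : ι}

@[simp]
theorem flipCoord_apply_self (u : ι → Bool) (i : ι) : flipCoord u i i = !u i := by
  simp [flipCoord]

theorem flipCoord_apply_of_ne (u : ι → Bool) (h : j ≠ i) : flipCoord u i j = u j := by
  simp [flipCoord, h]

@[simp]
theorem flipCoord_flipCoord_self (u : ι → Bool) (i : ι) : flipCoord (flipCoord u i) i = u := by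
  simp [flipCoord]

theorem flipCoord_comm (u : ι → Bool) (i j : ι) :
    flipCoord (flipCoord u i) j = flipCoord (flipCoord u j) i := by
  ext l
  by_cases hi : l = i <;> by_cases hj : l = j <;> simp_all [flipCoord]

theorem flipCoord_ne_flipCoord (u : ι → Bool) (h : i ≠ j) : flipCoord u i ≠ flipCoord u j := by
  intro huv
  simpa [flipCoord_apply_of_ne u h] using congrFun huv i

theorem flipCoord_flipCoord_ne_self (u : ι → Bool) (h : i ≠ j) :
    flipCoord (flipCoord u j) i ≠ u := by
  intro huv
  simpa [flipCoord_apply_of_ne u h] using congrFun huv i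

theorem update_eq_self_or_eq_flipCoord (u : ι → Bool) (i : ι) (b : Bool) :
    update u i b = u ∨ update u i b = flipCoord u i := by
  by_cases h : u i = b
  · exact Or.inl (h ▸ update_eq_self i u)
  · exact Or.inr (by rw [flipCoord, Bool.eq_not_of_ne (Ne.symm h)])

variable [Fintype ι]

theorem eq_of_flipCoord_invariant {α : Type*} (f : (ι → Bool) → α) (s : Set ι)
    (hf : ∀ u, ∀ i ∈ s, f (flipCoord u i) = f u) {u v : ι → Bool} (huv : ∀ i ∉ s, u i = v i) :
    f u = f v := by
  classical
  have key : ∀ t : Finset ι, ↑t ⊆ s → f (t.piecewise v u) = f u := by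
    intro t
    induction t using Finset.induction_on with
    | empty => simp
    | insert j t _ ih =>
      intro hts
      rw [Finset.coe_insert, Set.insert_subset_iff] at hts
      rw [Finset.piecewise_insert, ← ih hts.2]
      rcases update_eq_self_or_eq_flipCoord (t.piecewise v u) j (v j) with h | h <;> rw [h]
      exact hf _ j hts.1
  have hsub : ↑(Finset.univ.filter fun i => u i ≠ v i) ⊆ s := fun i hi => by
    by_contra his
    simp [huv i his] at hi
  rw [← key _ hsub]
  congr 1
  ext i
  by_cases h : u i = v i <;> simp [Finset.piecewise, h]

end FlipCoord

namespace SimpleGraph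

def hypercube (ι : Type*) [Fintype ι] : SimpleGraph (ι → Bool) where
  Adj u v := hammingDist u v = 1
  symm := ⟨fun _ _ h => by rwa [hammingDist_comm]⟩
  loopless := ⟨fun _ h => by simp at h⟩

namespace hypercube

variable {ι κ : Type*} [Fintype ι] [Fintype κ]

theorem adj_flipCoord [DecidableEq ι] (u : ι → Bool) (i : ι) :
    (hypercube ι).Adj u (flipCoord u i) := by
  change hammingDist u (flipCoord u i) = 1
  rw [hammingDist, Finset.card_eq_one]
  exact ⟨i, by ext j; by_cases h : j = i <;> simp [flipCoord_apply_of_ne, h]⟩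

def congr (e : ι ≃ κ) : hypercube ι ≃g hypercube κ where
  toEquiv := e.arrowCongr (Equiv.refl Bool)
  map_rel_iff' {u v} := by
    change hammingDist (u ∘ e.symm) (v ∘ e.symm) = 1 ↔ hammingDist u v = 1
    rw [hammingDist_comp_equiv]

def isoBoxProdSubtype (p : ι → Prop) [DecidablePred p] :
    hypercube ι ≃g (hypercube {i // p i}).boxProd (hypercube {i // ¬p i}) where
  toEquiv := Equiv.piEquivPiSubtypeProd p fun _ => Bool
  map_rel_iff' {u v} := by
    simp only [Equiv.piEquivPiSubtypeProd_apply, boxProd_adj, hypercube, ← hammingDist_eq_zero]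
    rw [hammingDist_eq_add_subtype p u v]
    omega

end hypercube

end SimpleGraph

theorem Set.range_eq_image_fst_prod_image_snd {α β V W : Type*} {f : α × β → V × W}
    (hfst : ∀ a b b', (f (a, b)).1 = (f (a, b')).1)
    (hsnd : ∀ a a' b, (f (a, b)).2 = (f (a', b)).2) :
    Set.range f = (Prod.fst '' Set.range f) ×ˢ (Prod.snd '' Set.range f) := by
  refine Set.Subset.antisymm (fun x hx => ⟨⟨x, hx, rfl⟩, x, hx, rfl⟩) ?_
  rintro ⟨v, w⟩ ⟨⟨_, ⟨⟨a, b⟩, rfl⟩, rfl⟩, _, ⟨⟨a', b'⟩, rfl⟩, rfl⟩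
  exact ⟨(a, b'), Prod.ext (hfst a b' b) (hsnd a a' b')⟩

namespace SimpleGraph

variable {α β V W : Type*} {G₁ : SimpleGraph α} {H₁ : SimpleGraph β}
  {G : SimpleGraph V} {H : SimpleGraph W}

namespace Embedding

def boxProdFst (Φ : G₁.boxProd H₁ ↪g G.boxProd H) (hsnd : ∀ a a' b, (Φ (a, b)).2 = (Φ (a', b)).2)
    (b : β) : G₁ ↪g G where
  toFun a := (Φ (a, b)).1
  inj' a a' h := congrArg Prod.fst (Φ.injective (Prod.ext h (hsnd a a' b)))
  map_rel_iff' {a a'} := by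
    change G.Adj (Φ (a, b)).1 (Φ (a', b)).1 ↔ G₁.Adj a a'
    rw [← boxProd_adj_left (G := G₁) (H := H₁) (b := b), ← Φ.map_adj_iff, boxProd_adj,
      hsnd a a' b]
    simp

theorem range_boxProdFst (Φ : G₁.boxProd H₁ ↪g G.boxProd H)
    (hfst : ∀ a b b', (Φ (a, b)).1 = (Φ (a, b')).1)
    (hsnd : ∀ a a' b, (Φ (a, b)).2 = (Φ (a', b)).2) (b : β) :
    Set.range (Φ.boxProdFst hsnd b) = Prod.fst '' Set.range Φ := by
  ext v
  constructor
  · rintro ⟨a, rfl⟩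
    exact ⟨_, ⟨_, rfl⟩, rfl⟩
  · rintro ⟨_, ⟨⟨a, b'⟩, rfl⟩, rfl⟩
    exact ⟨a, hfst a b b'⟩

theorem nonempty_induce_image_fst_iso [Nonempty β] (Φ : G₁.boxProd H₁ ↪g G.boxProd H)
    (hfst : ∀ a b b', (Φ (a, b)).1 = (Φ (a, b')).1)
    (hsnd : ∀ a a' b, (Φ (a, b)).2 = (Φ (a', b)).2) :
    Nonempty (G.induce (Prod.fst '' Set.range Φ) ≃g G₁) := by
  obtain ⟨b⟩ := ‹Nonempty β›
  rw [← Φ.range_boxProdFst hfst hsnd b]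
  exact ⟨(Φ.boxProdFst hsnd b).isoInduceRange.symm⟩

def boxProdSwap (Φ : G₁.boxProd H₁ ↪g G.boxProd H) : H₁.boxProd G₁ ↪g H.boxProd G :=
  (boxProdComm G H).toEmbedding.comp (Φ.comp (boxProdComm H₁ G₁).toEmbedding)

theorem nonempty_induce_image_snd_iso [Nonempty α] (Φ : G₁.boxProd H₁ ↪g G.boxProd H)
    (hfst : ∀ a b b', (Φ (a, b)).1 = (Φ (a, b')).1)
    (hsnd : ∀ a a' b, (Φ (a, b)).2 = (Φ (a', b)).2) :
    Nonempty (H.induce (Prod.snd '' Set.range Φ) ≃g H₁) := by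
  have h := Φ.boxProdSwap.nonempty_induce_image_fst_iso (fun b a a' => hsnd a a' b)
    (fun b b' a => hfst a b b')
  have : Prod.fst '' Set.range Φ.boxProdSwap = Prod.snd '' Set.range Φ := by
    simp [boxProdSwap, Set.range_comp, Set.image_image]
  rwa [this] at h

section Hypercube

variable {ι : Type*} [Fintype ι] [DecidableEq ι] (F : hypercube ι ↪g G.boxProd H)
  {u v : ι → Bool} {i : ι}

def IsHorizontal (u : ι → Bool) (i : ι) : Prop := (F (flipCoord u i)).2 = (F u).2

theorem adj_or_adj_flipCoord (u : ι → Bool) (i : ι) :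
    G.Adj (F u).1 (F (flipCoord u i)).1 ∧ (F u).2 = (F (flipCoord u i)).2 ∨
      H.Adj (F u).2 (F (flipCoord u i)).2 ∧ (F u).1 = (F (flipCoord u i)).1 :=
  boxProd_adj.1 (F.map_adj_iff.2 (hypercube.adj_flipCoord u i))

variable {F}

theorem IsHorizontal.adj_fst (h : F.IsHorizontal u i) : G.Adj (F u).1 (F (flipCoord u i)).1 := by
  rcases F.adj_or_adj_flipCoord u i with ⟨hG, -⟩ | ⟨hH, -⟩
  · exact hG
  · exact absurd (h ▸ hH) (H.irrefl)

theorem fst_flipCoord_of_not_isHorizontal (h : ¬F.IsHorizontal u i) :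
    (F (flipCoord u i)).1 = (F u).1 := by
  rcases F.adj_or_adj_flipCoord u i with ⟨-, h2⟩ | ⟨-, h1⟩
  · exact absurd h2.symm h
  · exact h1.symm

/-- Write `x, y, z, w` for the images of `u`, `u + eᵢ`, `u + eⱼ`, `u + eᵢ + eⱼ`. If `zw` were an
`H`-edge, each choice of types for `xz` and `yw` either makes `zw` a `G`-edge after all, or forces
`y = z` or `w = x`, or puts `x` and `y` in the same `H`-fibre. -/
theorem IsHorizontal.flipCoord (h : F.IsHorizontal u i) (j : ι) :
    F.IsHorizontal (flipCoord u j) i := by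
  rcases eq_or_ne i j with rfl | hij
  · rw [IsHorizontal, flipCoord_flipCoord_self]
    exact h.symm
  by_contra hzw
  have hwz := fst_flipCoord_of_not_isHorizontal hzw
  have hyw := F.adj_or_adj_flipCoord (_root_.flipCoord u i) j
  rw [flipCoord_comm] at hyw
  rcases F.adj_or_adj_flipCoord u j with ⟨-, hxz⟩ | ⟨-, hxz⟩ <;>
    rcases hyw with ⟨-, hyw⟩ | ⟨-, hyw⟩
  · exact hzw (by rw [IsHorizontal, ← hyw, h, hxz])
  · exact flipCoord_ne_flipCoord u hij (F.injective (Prod.ext (hyw.trans hwz) (h.trans hxz)))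
  · exact flipCoord_flipCoord_ne_self u hij
      (F.injective (Prod.ext (hwz.trans hxz.symm) (hyw.symm.trans h)))
  · exact h.adj_fst.ne (hxz.trans (hwz.symm.trans hyw.symm))

theorem isHorizontal_flipCoord_iff (j : ι) :
    F.IsHorizontal (flipCoord u j) i ↔ F.IsHorizontal u i :=
  ⟨fun h => by simpa using h.flipCoord j, fun h => h.flipCoord j⟩

theorem isHorizontal_iff_isHorizontal (u v : ι → Bool) (i : ι) :
    F.IsHorizontal u i ↔ F.IsHorizontal v i :=
  Iff.of_eq <| eq_of_flipCoord_invariant (fun u => F.IsHorizontal u i) Set.univ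
    (fun _ j _ => propext (isHorizontal_flipCoord_iff j)) (by simp)

variable (F)

def IsHorizontalDir (i : ι) : Prop := ∀ u, F.IsHorizontal u i

variable {F}

theorem isHorizontalDir_iff (u : ι → Bool) : F.IsHorizontalDir i ↔ F.IsHorizontal u i :=
  ⟨fun h => h u, fun h v => (isHorizontal_iff_isHorizontal u v i).1 h⟩

theorem fst_eq_of_forall_isHorizontalDir (huv : ∀ i, F.IsHorizontalDir i → u i = v i) :
    (F u).1 = (F v).1 :=
  eq_of_flipCoord_invariant (fun u => (F u).1) {i | ¬F.IsHorizontalDir i}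
    (fun u _ hi => fst_flipCoord_of_not_isHorizontal (mt (isHorizontalDir_iff u).2 hi))
    (fun i hi => huv i (not_not.1 hi))

theorem snd_eq_of_forall_not_isHorizontalDir (huv : ∀ i, ¬F.IsHorizontalDir i → u i = v i) :
    (F u).2 = (F v).2 :=
  eq_of_flipCoord_invariant (fun u => (F u).2) {i | F.IsHorizontalDir i} (fun u _ hi => hi u) huv

variable (F) [DecidablePred F.IsHorizontalDir]

def splitHorizontal : (hypercube {i // F.IsHorizontalDir i}).boxProd
    (hypercube {i // ¬F.IsHorizontalDir i}) ↪g G.boxProd H :=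
  F.comp (hypercube.isoBoxProdSubtype F.IsHorizontalDir).symm.toEmbedding

theorem range_splitHorizontal : Set.range F.splitHorizontal = Set.range F :=
  (hypercube.isoBoxProdSubtype F.IsHorizontalDir).symm.surjective.range_comp F

theorem splitHorizontal_fst (a b b') :
    (F.splitHorizontal (a, b)).1 = (F.splitHorizontal (a, b')).1 :=
  fst_eq_of_forall_isHorizontalDir fun i hi => by
    simp [hypercube.isoBoxProdSubtype, hi]

theorem splitHorizontal_snd (a a' b) :
    (F.splitHorizontal (a, b)).2 = (F.splitHorizontal (a', b)).2 :=
  snd_eq_of_forall_not_isHorizontalDir fun i hi => by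
    simp [hypercube.isoBoxProdSubtype, hi]

end Hypercube

end Embedding

end SimpleGraph

open SimpleGraph

theorem induced_cube_in_boxProd_is_product_of_projections {V W : Type*}
    (G : SimpleGraph V) (H : SimpleGraph W) (d : ℕ) (S : Set (V × W))
    (hS : Nonempty ((G.boxProd H).induce S ≃g Qcube d)) :
    ∃ k ≤ d, Nonempty (G.induce (Prod.fst '' S) ≃g Qcube k) ∧
      Nonempty (H.induce (Prod.snd '' S) ≃g Qcube (d - k)) ∧
      S = (Prod.fst '' S) ×ˢ (Prod.snd '' S) := by
  classical
  obtain ⟨e⟩ := hS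
  let F : hypercube (Fin d) ↪g G.boxProd H := (Embedding.induce S).comp e.symm.toEmbedding
  have hF : Set.range F.splitHorizontal = S := by
    rw [F.range_splitHorizontal]
    exact (e.symm.surjective.range_comp _).trans Subtype.range_coe
  have hfst := F.splitHorizontal_fst
  have hsnd := F.splitHorizontal_snd
  obtain ⟨φ⟩ := F.splitHorizontal.nonempty_induce_image_fst_iso hfst hsnd
  obtain ⟨ψ⟩ := F.splitHorizontal.nonempty_induce_image_snd_iso hfst hsnd
  have hcard : d - Fintype.card {i // F.IsHorizontalDir i} =
      Fintype.card {i // ¬F.IsHorizontalDir i} := by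
    rw [Fintype.card_subtype_compl, Fintype.card_fin]
  rw [← hF]
  refine ⟨_, (Fintype.card_subtype_le _).trans_eq (Fintype.card_fin d),
    ⟨φ.trans (hypercube.congr (Fintype.equivFin _))⟩, ?_,
    Set.range_eq_image_fst_prod_image_snd hfst hsnd⟩
  rw [hcard]
  exact ⟨ψ.trans (hypercube.congr (Fintype.equivFin _))⟩
end

section
/- If G = Q_n(X) is a daisy cube, then C_G(x) = W_{G,0^n}(x + 1), where C_G is the cube polynomial of G and W_{G,0^n} is the counting polynomial of the number of vertices of G at a given distance from 0^n. -/
/-!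
An induced `k`-cube of `Q_n` is a subcube. Indeed, let `f : Q_k → Q_n` be an injective graph
map. Along the edge `b — flipAt b i` the map `f` flips a single coordinate `dir b i`; the images
of the opposite sides of a square of `Q_k` are opposite sides of a square of `Q_n`, so
`dir b i` does not depend on `b`, and `f` is `b ↦ f ⊥ + ∑_{b i} e_(c i)` for an injective `c`.

In a daisy cube `G`, that is, a down-set of `Q_n`, a subcube lies in `G` if and only if its top
vertex `t` does, and it is then determined by `t` and by a set of `k` directions among the ones of
`t`. Hence `c_k(G) = ∑_{t ∈ G} C(|t|, k)`. Walking down from `t` one coordinate at a time shows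
that `t` is at distance `|t|` from `0ⁿ`. Therefore
`C_G(x) = ∑_{t ∈ G} (1 + x)^|t| = W_{G,0ⁿ}(x + 1)`.
-/

open Finset Function

section BitVectors

variable {ι : Type*} [DecidableEq ι]

def flipAt (u : ι → Bool) (j : ι) : ι → Bool := fun m => u m ^^ decide (m = j)

@[simp] lemma flipAt_apply (u : ι → Bool) (j m : ι) : flipAt u j m = (u m ^^ decide (m = j)) :=
  rfl

lemma flipAt_flipAt_eq_self_iff {u : ι → Bool} {a a' : ι} :
    flipAt (flipAt u a) a' = u ↔ a = a' := by
  refine ⟨fun h => ?_, fun h => funext fun m => by simp [h]⟩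
  by_contra hne
  simpa [hne] using congrFun h a

lemma flipAt_injective (u : ι → Bool) : Injective (flipAt u) := fun a a' h => by
  by_contra hne
  simpa [hne] using congrFun h a

lemma flipAt_flipAt_comm (u : ι → Bool) (a a' : ι) :
    flipAt (flipAt u a) a' = flipAt (flipAt u a') a :=
  funext fun m => by simp only [flipAt_apply, Bool.xor_assoc, Bool.xor_comm (decide (m = a))]

lemma eq_of_flipAt_flipAt_eq {u : ι → Bool} {a a' c c' : ι}
    (h : flipAt (flipAt u a) a' = flipAt (flipAt u c) c') (haa' : a ≠ a') (hac : a ≠ c) :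
    c' = a := by
  by_contra hne
  simpa [haa', hac, Ne.symm hne] using congrFun h a

lemma flipAt_le {v : ι → Bool} {j : ι} (h : v j = true) : flipAt v j ≤ v := by
  intro i
  by_cases hij : i = j
  · simp [hij, h]
  · simp [hij]

end BitVectors

section HammingDist

variable {ι : Type*} [Fintype ι]

def ones (u : ι → Bool) : Finset ι := {j | u j = true}

lemma mem_ones {u : ι → Bool} {j : ι} : j ∈ ones u ↔ u j = true := by simp [ones]

lemma hammingDist_bot_left (v : ι → Bool) : hammingDist ⊥ v = #(ones v) := by
  simp only [hammingDist, ones]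
  congr 1
  ext i
  cases v i <;> simp

variable [DecidableEq ι]

lemma hammingDist_eq_one_iff {u v : ι → Bool} :
    hammingDist u v = 1 ↔ ∃ j, v = flipAt u j := by
  rw [hammingDist, card_eq_one]
  refine exists_congr fun j => ⟨fun h => funext fun m => ?_, fun h => ?_⟩
  · have hm : u m ≠ v m ↔ m = j := by simpa using congrArg (m ∈ ·) h
    by_cases hmj : m = j <;> cases hu : u m <;> cases hv : v m <;> simp_all
  · ext m
    by_cases hmj : m = j <;> simp [h, hmj]

lemma hammingDist_flipAt_add_one {u v : ι → Bool} {j : ι} (h : u j ≠ v j) :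
    hammingDist u (flipAt v j) + 1 = hammingDist u v := by
  rw [hammingDist, hammingDist,
    ← card_erase_add_one (s := ({i | u i ≠ v i} : Finset ι)) (by simpa using h)]
  congr 2
  ext i
  rw [mem_filter, mem_erase, mem_filter]
  by_cases hij : i = j
  · subst hij
    cases hu : u i <;> cases hv : v i <;> simp_all
  · simp [hij]

lemma flipAt_induction {P : (ι → Bool) → Prop} (bot : P ⊥)
    (step : ∀ b i, P b → P (flipAt b i)) (b : ι → Bool) : P b := by
  have key : ∀ s : Finset ι, P fun j => decide (j ∈ s) := by
    intro s
    induction s using Finset.induction_on with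
    | empty => exact bot
    | insert a s ha ih =>
      convert step _ a ih using 1
      funext m
      by_cases hm : m = a <;> simp [hm, ha]
  convert key (ones b)
  simp [mem_ones]

end HammingDist

section Subcubes

variable {ι : Type*} {t t' : ι → Bool} {K K' : Finset ι}

def subcube (t : ι → Bool) (K : Finset ι) : Set (ι → Bool) := {v | ∀ j ∉ K, v j = t j}

lemma mem_subcube_self : t ∈ subcube t K := fun _ _ => rfl

lemma subset_of_subcube_subset [DecidableEq ι] (h : subcube t K ⊆ subcube t' K') : K ⊆ K' := by
  intro j hj
  by_contra hj'
  have hflip : flipAt t j ∈ subcube t K := fun m hm => by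
    simp [show m ≠ j from fun h => hm (h ▸ hj)]
  simpa [← h mem_subcube_self j hj'] using h hflip j hj'

variable [Fintype ι]

lemma le_of_mem_subcube (hK : K ⊆ ones t) {v : ι → Bool} (hv : v ∈ subcube t K) :
    v ≤ t := by
  intro j
  by_cases hj : j ∈ K
  · simp [mem_ones.1 (hK hj)]
  · exact (hv j hj).le

lemma subcube_injOn [DecidableEq ι] (hK : K ⊆ ones t) (hK' : K' ⊆ ones t')
    (h : subcube t K = subcube t' K') : t = t' ∧ K = K' := by
  have hKK' : K = K' := (subset_of_subcube_subset h.le).antisymm (subset_of_subcube_subset h.ge)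
  refine ⟨funext fun j => ?_, hKK'⟩
  by_cases hj : j ∈ K
  · rw [mem_ones.1 (hK hj), mem_ones.1 (hK' (hKK' ▸ hj))]
  · exact (h ▸ mem_subcube_self) j (hKK' ▸ hj)

lemma exists_subset_ones_subcube_eq (base : ι → Bool) (K : Finset ι) :
    ∃ t, K ⊆ ones t ∧ subcube t K = subcube base K := by
  classical
  refine ⟨fun j => decide (j ∈ K) || base j, fun j hj => by simp [mem_ones, hj], ?_⟩
  ext v
  exact forall₂_congr fun j hj => by simp [hj]

end Subcubes

section CubeMaps

variable {ι κ : Type*} [DecidableEq ι] [Fintype κ] {base : ι → Bool} {c : κ → ι}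

def cubeMap (base : ι → Bool) (c : κ → ι) (b : κ → Bool) : ι → Bool :=
  fun j => base j ^^ decide (∃ i, c i = j ∧ b i = true)

lemma cubeMap_apply_of_injective (hc : Injective c) (b : κ → Bool) (i : κ) :
    cubeMap base c b (c i) = (base (c i) ^^ b i) := by
  simp [cubeMap, hc.eq_iff]

lemma cubeMap_apply_of_notMem_range {j : ι} (hj : j ∉ Set.range c) (b : κ → Bool) :
    cubeMap base c b j = base j := by
  simp_all [cubeMap]

lemma cubeMap_bot : cubeMap base c ⊥ = base := by
  funext j; simp [cubeMap]

lemma cubeMap_flipAt [DecidableEq κ] (hc : Injective c) (b : κ → Bool) (i : κ) :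
    cubeMap base c (flipAt b i) = flipAt (cubeMap base c b) (c i) := by
  funext j
  by_cases hj : j ∈ Set.range c
  · obtain ⟨l, rfl⟩ := hj
    simp [cubeMap_apply_of_injective hc, hc.eq_iff]
  · have : j ≠ c i := fun h => hj ⟨i, h.symm⟩
    simp [cubeMap_apply_of_notMem_range hj, this]

lemma range_cubeMap (hc : Injective c) :
    Set.range (cubeMap base c) = subcube base (univ.image c) := by
  ext v
  refine ⟨?_, fun hv => ⟨fun i => v (c i) ^^ base (c i), funext fun j => ?_⟩⟩
  · rintro ⟨b, rfl⟩ j hj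
    exact cubeMap_apply_of_notMem_range (by simpa using hj) b
  · by_cases hj : j ∈ Set.range c
    · obtain ⟨l, rfl⟩ := hj
      rw [cubeMap_apply_of_injective hc, Bool.xor_left_comm, Bool.xor_self, Bool.xor_false]
    · rw [cubeMap_apply_of_notMem_range hj, hv j (by simpa using hj)]

lemma hammingDist_cubeMap [Fintype ι] (hc : Injective c) (b b' : κ → Bool) :
    hammingDist (cubeMap base c b) (cubeMap base c b') = hammingDist b b' := by
  rw [hammingDist, hammingDist, ← card_image_of_injective _ hc]
  congr 1
  ext j
  by_cases hj : j ∈ Set.range c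
  · obtain ⟨l, rfl⟩ := hj
    simp [cubeMap_apply_of_injective hc, hc.eq_iff]
  · simp_all [cubeMap_apply_of_notMem_range hj]

end CubeMaps

section CubeClassification

variable {ι κ : Type*} [DecidableEq ι] [DecidableEq κ]
  {f : (κ → Bool) → (ι → Bool)} {dir : (κ → Bool) → κ → ι}

lemma dir_flipAt_eq_dir (hf : Injective f)
    (hdir : ∀ b i, f (flipAt b i) = flipAt (f b) (dir b i)) (b : κ → Bool) (i l : κ) :
    dir (flipAt b l) i = dir b i := by
  rcases eq_or_ne l i with rfl | hli
  · have h := hdir (flipAt b l) l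
    rw [flipAt_flipAt_eq_self_iff.2 rfl, hdir b l, eq_comm, flipAt_flipAt_eq_self_iff] at h
    exact h.symm
  -- The square `b, flipAt b i, flipAt (flipAt b i) l, flipAt b l` is sent to a square, whose
  -- opposite sides flip the same coordinate.
  · apply eq_of_flipAt_flipAt_eq (u := f b) (c := dir b l)
    · rw [← hdir, ← hdir, ← hdir, ← hdir, flipAt_flipAt_comm]
    · intro h
      have := hdir (flipAt b i) l
      rw [hdir b i, ← h, flipAt_flipAt_eq_self_iff.2 rfl] at this
      exact hli (flipAt_flipAt_eq_self_iff.1 (hf this)).symm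
    · intro h
      exact hli (flipAt_injective b (hf (by rw [hdir, hdir, h]))).symm

lemma dir_eq_dir_bot [Fintype κ] (hf : Injective f)
    (hdir : ∀ b i, f (flipAt b i) = flipAt (f b) (dir b i)) (b : κ → Bool) (i : κ) :
    dir b i = dir ⊥ i :=
  flipAt_induction (P := fun b => dir b i = dir ⊥ i) rfl
    (fun b l h => (dir_flipAt_eq_dir hf hdir b i l).trans h) b

lemma injective_dir_bot (hf : Injective f)
    (hdir : ∀ b i, f (flipAt b i) = flipAt (f b) (dir b i)) : Injective (dir ⊥) :=
  fun i i' h => flipAt_injective ⊥ (hf (by rw [hdir, hdir, h]))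

lemma eq_cubeMap_dir_bot [Fintype κ] (hf : Injective f)
    (hdir : ∀ b i, f (flipAt b i) = flipAt (f b) (dir b i)) : f = cubeMap (f ⊥) (dir ⊥) :=
  funext <| flipAt_induction cubeMap_bot.symm fun b i h => by
    rw [hdir, h, dir_eq_dir_bot hf hdir, cubeMap_flipAt (injective_dir_bot hf hdir)]

theorem exists_injective_eq_cubeMap [Fintype ι] [Fintype κ] (hf : Injective f)
    (hadj : ∀ b b', hammingDist b b' = 1 → hammingDist (f b) (f b') = 1) :
    ∃ c : κ → ι, Injective c ∧ f = cubeMap (f ⊥) c := by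
  have : ∀ b i, ∃ j, f (flipAt b i) = flipAt (f b) j := fun b i =>
    hammingDist_eq_one_iff.1 (hadj _ _ (hammingDist_eq_one_iff.2 ⟨i, rfl⟩))
  choose dir hdir using this
  exact ⟨dir ⊥, injective_dir_bot hf hdir, eq_cubeMap_dir_bot hf hdir⟩

end CubeClassification

namespace SimpleGraph

variable {V W : Type*}

lemma nonempty_induce_iso_iff {G : SimpleGraph V} {H : SimpleGraph W} {T : Set V} :
    Nonempty (G.induce T ≃g H) ↔ ∃ f : H ↪g G, Set.range f = T := by
  refine ⟨fun ⟨φ⟩ => ⟨(Embedding.induce T).comp φ.symm.toEmbedding, ?_⟩, ?_⟩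
  · exact (φ.symm.surjective.range_comp _).trans Subtype.range_coe
  · rintro ⟨f, rfl⟩
    exact ⟨f.isoInduceRange.symm⟩

noncomputable def induceInduceIso (G : SimpleGraph V) (D : Set V) (S : Set D) :
    (G.induce D).induce S ≃g G.induce (Subtype.val '' S) where
  __ := Equiv.Set.image _ S Subtype.val_injective
  map_rel_iff' := Iff.rfl

lemma cubeCount_induce (G : SimpleGraph V) (D : Set V) (k : ℕ) :
    cubeCount (G.induce D) k = Set.ncard {T | T ⊆ D ∧ Nonempty (G.induce T ≃g Qcube k)} := by
  rw [cubeCount, ← Set.ncard_image_of_injective _ (Set.image_injective.2 Subtype.val_injective)]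
  congr 1
  ext T
  constructor
  · rintro ⟨S, ⟨φ⟩, rfl⟩
    exact ⟨by simp, ⟨(G.induceInduceIso D S).symm.trans φ⟩⟩
  · rintro ⟨hT, ⟨φ⟩⟩
    have hTD : Subtype.val '' (Subtype.val ⁻¹' T : Set D) = T := by simpa using hT
    refine ⟨Subtype.val ⁻¹' T, ⟨(G.induceInduceIso D _).trans ?_⟩, hTD⟩
    rw [hTD]
    exact φ

end SimpleGraph

section Hypercube

variable {n k : ℕ}

def cubeMapEmbedding (base : Fin n → Bool) (c : Fin k ↪ Fin n) : Qcube k ↪g Qcube n where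
  toFun := cubeMap base c
  inj' b b' h := hammingDist_eq_zero.1 <| by
    rw [← hammingDist_cubeMap (base := base) c.injective, h, hammingDist_self]
  map_rel_iff' {b b'} := by
    change hammingDist (cubeMap base c b) (cubeMap base c b') = 1 ↔ hammingDist b b' = 1
    rw [hammingDist_cubeMap c.injective]

lemma range_cubeMapEmbedding (base : Fin n → Bool) (c : Fin k ↪ Fin n) :
    Set.range (cubeMapEmbedding base c) = subcube base (univ.map c) := by
  rw [map_eq_image]
  exact range_cubeMap c.injective

theorem nonempty_induce_iso_qcube_iff {T : Set (Fin n → Bool)} :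
    Nonempty ((Qcube n).induce T ≃g Qcube k) ↔
      ∃ base, ∃ K : Finset (Fin n), #K = k ∧ T = subcube base K := by
  rw [SimpleGraph.nonempty_induce_iso_iff]
  constructor
  · rintro ⟨f, rfl⟩
    obtain ⟨c, hc, hf⟩ := exists_injective_eq_cubeMap f.injective fun b b' => f.map_adj_iff.2
    refine ⟨f ⊥, univ.image c, by simp [card_image_of_injective _ hc], ?_⟩
    rw [hf, range_cubeMap hc, cubeMap_bot]
  · rintro ⟨base, K, rfl, rfl⟩
    refine ⟨cubeMapEmbedding base (K.orderEmbOfFin rfl).toEmbedding, ?_⟩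
    rw [range_cubeMapEmbedding, map_eq_image]
    exact congrArg _ (image_orderEmbOfFin_univ K rfl)

lemma hammingDist_le_length {u v : Fin n → Bool} (w : (Qcube n).Walk u v) :
    hammingDist u v ≤ w.length := by
  induction w with
  | nil => simp
  | cons h _ ih =>
    rw [SimpleGraph.Walk.length_cons]
    exact (hammingDist_triangle _ _ _).trans (by rw [show hammingDist _ _ = 1 from h]; omega)

end Hypercube

section LowerSets

variable {n : ℕ} {D : Set (Fin n → Bool)}

lemma subcube_subset_iff_mem (hD : IsLowerSet D) {t : Fin n → Bool} {K : Finset (Fin n)}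
    (hK : K ⊆ ones t) : subcube t K ⊆ D ↔ t ∈ D :=
  ⟨fun h => h mem_subcube_self, fun ht _ hv => hD (le_of_mem_subcube hK hv) ht⟩

lemma cubeCount_induce_of_isLowerSet (hD : IsLowerSet D) [DecidablePred (· ∈ D)] (k : ℕ) :
    cubeCount ((Qcube n).induce D) k = ∑ t ∈ D.toFinset, (#(ones t)).choose k := by
  have hcubes : {T | T ⊆ D ∧ Nonempty ((Qcube n).induce T ≃g Qcube k)} =
      (fun p : (_ : Fin n → Bool) × Finset (Fin n) => subcube p.1 p.2) ''
        ↑(D.toFinset.sigma fun t => (ones t).powersetCard k) := by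
    ext T
    simp only [nonempty_induce_iso_qcube_iff, Set.mem_ofPred_eq, Set.mem_image, coe_sigma,
      Set.mem_sigma_iff, Set.mem_toFinset, mem_coe, mem_powersetCard, Sigma.exists]
    constructor
    · rintro ⟨hT, base, K, hK, rfl⟩
      obtain ⟨t, hKt, ht⟩ := exists_subset_ones_subcube_eq base K
      exact ⟨t, K, ⟨(subcube_subset_iff_mem hD hKt).1 (ht ▸ hT), hKt, hK⟩, ht⟩
    · rintro ⟨t, K, ⟨ht, hKt, hK⟩, rfl⟩
      exact ⟨(subcube_subset_iff_mem hD hKt).2 ht, t, K, hK, rfl⟩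
  have hinj : Set.InjOn (fun p : (_ : Fin n → Bool) × Finset (Fin n) => subcube p.1 p.2)
      ↑(D.toFinset.sigma fun t => (ones t).powersetCard k) := by
    rintro ⟨t, K⟩ hp ⟨t', K'⟩ hp' h
    simp only [coe_sigma, Set.mem_sigma_iff, mem_coe, mem_powersetCard] at hp hp'
    obtain ⟨rfl, rfl⟩ := subcube_injOn hp.2.1 hp'.2.1 h
    rfl
  rw [SimpleGraph.cubeCount_induce, hcubes, hinj.ncard_image, Set.ncard_coe_finset, card_sigma]
  simp [card_powersetCard]

lemma exists_walk_induce_of_le (hD : IsLowerSet D) (u v : D) (huv : u.1 ≤ v.1) :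
    ∃ w : ((Qcube n).induce D).Walk u v, w.length = hammingDist u.1 v.1 := by
  obtain ⟨m, hm⟩ : ∃ m, hammingDist u.1 v.1 = m := ⟨_, rfl⟩
  induction m generalizing v with
  | zero =>
    obtain rfl : u = v := Subtype.ext (hammingDist_eq_zero.1 hm)
    exact ⟨.nil, hm.symm⟩
  | succ m ih =>
    obtain ⟨j, hj⟩ : ∃ j, u.1 j ≠ v.1 j := by
      by_contra! h
      simp [funext h] at hm
    obtain ⟨huj, hvj⟩ := Bool.lt_iff.1 (lt_of_le_of_ne (huv j) hj)
    let v' : D := ⟨flipAt v.1 j, hD (flipAt_le hvj) v.2⟩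
    have huv' : u.1 ≤ v'.1 := fun i => by
      by_cases hij : i = j
      · simp [v', hij, huj, hvj]
      · simpa [v', hij] using huv i
    have hm' : hammingDist u.1 v'.1 = m := by
      have := hammingDist_flipAt_add_one hj
      change hammingDist u.1 (flipAt v.1 j) = m
      omega
    obtain ⟨w, hw⟩ := ih v' huv' hm'
    have hadj : ((Qcube n).induce D).Adj v' v := by
      change hammingDist (flipAt v.1 j) v.1 = 1
      rw [hammingDist_comm]
      exact hammingDist_eq_one_iff.2 ⟨j, rfl⟩
    exact ⟨w.concat hadj, by simp [hw, hm, hm']⟩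

lemma dist_induce_of_le (hD : IsLowerSet D) (u v : D) (huv : u.1 ≤ v.1) :
    ((Qcube n).induce D).dist u v = hammingDist u.1 v.1 := by
  obtain ⟨w, hw⟩ := exists_walk_induce_of_le hD u v huv
  obtain ⟨p, hp⟩ := w.reachable.exists_walk_length_eq_dist
  refine le_antisymm (hw ▸ SimpleGraph.dist_le w) ?_
  rw [← hp, ← SimpleGraph.Walk.length_map (SimpleGraph.Embedding.induce D).toHom p]
  exact hammingDist_le_length _

lemma wCount_induce_of_isLowerSet (hD : IsLowerSet D) [DecidablePred (· ∈ D)] (h0 : ⊥ ∈ D)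
    (d : ℕ) :
    wCount ((Qcube n).induce D) ⟨⊥, h0⟩ d = #{t ∈ D.toFinset | #(ones t) = d} := by
  rw [wCount, ← Set.ncard_image_of_injective _ Subtype.val_injective, ← Set.ncard_coe_finset]
  congr 1
  ext t
  simp [dist_induce_of_le hD, hammingDist_bot_left, and_comm]

end LowerSets

lemma isLowerSet_daisySet {n : ℕ} (X : Set (Fin n → Bool)) : IsLowerSet (daisySet X) :=
  fun _ _ hba ⟨x, hx, hax⟩ => ⟨x, hx, hba.trans hax⟩

lemma sum_range_choose_mul_pow {R : Type*} [CommSemiring R] {m N : ℕ} (h : m < N) (x : R) :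
    ∑ k ∈ range N, (m.choose k : R) * x ^ k = (x + 1) ^ m := by
  rw [add_pow, ← sum_subset (range_subset_range.2 h) fun k _ hk => ?_]
  · exact sum_congr rfl fun k _ => by rw [one_pow, mul_one, mul_comm]
  · rw [Nat.choose_eq_zero_of_lt (by simpa using hk), Nat.cast_zero, zero_mul]

theorem cubePolynomial_of_daisy_cube_eq_W (n : ℕ)
    (X : Set (Fin n → Bool)) (h0 : (fun _ => false) ∈ daisySet X) (x : ℝ) :
    ∑ k ∈ Finset.range (2 ^ n + 1),
      (cubeCount ((Qcube n).induce (daisySet X)) k : ℝ) * x ^ k =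
    ∑ d ∈ Finset.range (2 ^ n + 1),
      (wCount ((Qcube n).induce (daisySet X)) ⟨fun _ => false, h0⟩ d : ℝ) * (x + 1) ^ d := by
  classical
  have hD := isLowerSet_daisySet X
  have hweight : ∀ t : Fin n → Bool, #(ones t) < 2 ^ n + 1 := fun t => Nat.lt_succ_of_le <|
    ((card_le_univ _).trans_eq (Fintype.card_fin n)).trans Nat.lt_two_pow_self.le
  calc _ = ∑ t ∈ (daisySet X).toFinset, (x + 1) ^ #(ones t) := by
        simp_rw [cubeCount_induce_of_isLowerSet hD, Nat.cast_sum, sum_mul]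
        rw [sum_comm]
        exact sum_congr rfl fun t _ => sum_range_choose_mul_pow (hweight t) x
    _ = _ := by
        rw [← sum_fiberwise_of_maps_to' fun t _ => mem_range.2 (hweight t)]
        refine sum_congr rfl fun d _ => ?_
        rw [sum_const, nsmul_eq_mul, ← wCount_induce_of_isLowerSet hD h0]
        -- `⊥ : Fin n → Bool` unfolds to `fun _ => false`.
        rfl
end

section
/- The class of daisy cubes is closed under the Cartesian product: if X ⊆ {0,1}^n and Y ⊆ {0,1}^m, then the Cartesian product Q_n(X) □ Q_m(Y) is isomorphic to the daisy cube Q_{n+m}(Z), where Z = {xy : x ∈ X, y ∈ Y} is the set of concatenations of a word of X with a word of Y. -/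
/-! Concatenation of words is a graph isomorphism `Q_n □ Q_m ≃g Q_{n+m}` which, being
coordinatewise, carries the product of two down-sets `daisySet X ×ˢ daisySet Y` onto the
down-set generated by the concatenations `xy`. Induced subgraphs commute with `□`, so the
isomorphism restricts to the claimed one. -/

open SimpleGraph

def SimpleGraph.boxProdInduceIso {α β : Type*} (G : SimpleGraph α) (H : SimpleGraph β)
    (s : Set α) (t : Set β) :
    (G.induce s).boxProd (H.induce t) ≃g (G.boxProd H).induce (s ×ˢ t) where
  toEquiv := (Equiv.Set.prod s t).symm
  map_rel_iff' := by
    rintro ⟨⟨a, ha⟩, ⟨b, hb⟩⟩ ⟨⟨a', ha'⟩, ⟨b', hb'⟩⟩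
    change (G.Adj a a' ∧ b = b' ∨ H.Adj b b' ∧ a = a') ↔ _
    simp [boxProd_adj]

theorem hammingDist_append {α : Type*} [DecidableEq α] {n m : ℕ} (x x' : Fin n → α)
    (y y' : Fin m → α) :
    hammingDist (Fin.append x y) (Fin.append x' y') = hammingDist x x' + hammingDist y y' := by
  simp only [hammingDist, Finset.card_filter, Fin.sum_univ_add, Fin.append_left,
    Fin.append_right]

theorem Fin.append_le_append_iff {α : Type*} [Preorder α] {n m : ℕ} {x x' : Fin n → α}
    {y y' : Fin m → α} : Fin.append x y ≤ Fin.append x' y' ↔ x ≤ x' ∧ y ≤ y' := by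
  simp only [Pi.le_def, Fin.forall_fin_add, Fin.append_left, Fin.append_right]

def qcubeBoxProdIso (n m : ℕ) : (Qcube n).boxProd (Qcube m) ≃g Qcube (n + m) where
  toEquiv := Fin.appendEquiv n m
  map_rel_iff' := by
    rintro ⟨x, y⟩ ⟨x', y'⟩
    change hammingDist (Fin.append x y) (Fin.append x' y') = 1 ↔
      hammingDist x x' = 1 ∧ y = y' ∨ hammingDist y y' = 1 ∧ x = x'
    rw [hammingDist_append, Nat.add_eq_one_iff, hammingDist_eq_zero, hammingDist_eq_zero]
    tauto

theorem append_mem_daisySet_iff {n m : ℕ} {X : Set (Fin n → Bool)} {Y : Set (Fin m → Bool)}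
    {u : Fin n → Bool} {v : Fin m → Bool} :
    Fin.append u v ∈ daisySet {z : Fin (n + m) → Bool | ∃ x ∈ X, ∃ y ∈ Y, z = Fin.append x y} ↔
      u ∈ daisySet X ∧ v ∈ daisySet Y := by
  constructor
  · rintro ⟨_, ⟨x, hx, y, hy, rfl⟩, hle⟩
    obtain ⟨hux, hvy⟩ := Fin.append_le_append_iff.mp hle
    exact ⟨⟨x, hx, hux⟩, ⟨y, hy, hvy⟩⟩
  · rintro ⟨⟨x, hx, hux⟩, ⟨y, hy, hvy⟩⟩
    exact ⟨_, ⟨x, hx, y, hy, rfl⟩, Fin.append_le_append_iff.mpr ⟨hux, hvy⟩⟩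

theorem daisy_cubes_closed_under_boxProd (n m : ℕ)
    (X : Set (Fin n → Bool)) (Y : Set (Fin m → Bool)) :
    Nonempty
      ((((Qcube n).induce (daisySet X)).boxProd ((Qcube m).induce (daisySet Y))) ≃g
        (Qcube (n + m)).induce
          (daisySet {z : Fin (n + m) → Bool | ∃ x ∈ X, ∃ y ∈ Y, z = Fin.append x y})) := by
  have hbij : Set.BijOn (qcubeBoxProdIso n m) (daisySet X ×ˢ daisySet Y)
      (daisySet {z : Fin (n + m) → Bool | ∃ x ∈ X, ∃ y ∈ Y, z = Fin.append x y}) :=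
    (Fin.appendEquiv n m).bijOn fun _ => append_mem_daisySet_iff
  exact ⟨(boxProdInduceIso _ _ _ _).trans ((qcubeBoxProdIso n m).induce hbij)⟩
end

section
/- For every n ≥ 1, the distance cube polynomial of the Fibonacci cube Γ_n with respect to the vertex 0^n satisfies D_{Γ_n,0^n}(x,y) = Σ_{a=0}^{⌊(n+1)/2⌋} binom(n−a+1, a) (x + y)^a; equivalently, for all k, d ≥ 0 the number of induced k-cubes of Γ_n at distance d from 0^n equals binom(n−k−d+1, k+d) · binom(k+d, d). -/
def fibSet (n : ℕ) : Set (Fin n → Bool) :=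
  {u | ∀ i j : Fin n, (j : ℕ) = (i : ℕ) + 1 → ¬(u i = true ∧ u j = true)}

lemma zero_mem_fibSet (n : ℕ) : (fun _ => false) ∈ fibSet n := by
  intro i j _ h
  simp at h

/-!
Identify a word with its set of 1-positions: `Q_n` becomes the graph on finsets of `Fin n` in which
two sets are adjacent when their symmetric difference is a singleton, and `Γ_n` becomes its
restriction to the sets with no two consecutive elements, a family closed under taking subsets.

An induced `k`-cube of a hypercube is an interval `[c, w]` with `|w \ c| = k`: since two vertices
at distance two have exactly two common neighbours, an induced embedding `Q_k → Q_n` has the form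
`X ↦ b ∆ f(X)` for an injection `f`. In a subset-closed family the distance from `∅` to `s` is
`|s|`, so `[c, w]` lies at distance `|c|`. The `k`-cubes at distance `d` thus correspond to the
pairs `c ⊆ w` with `w` in the family, `|w| = k + d` and `|c| = d`, and there are
`#{w : |w| = k + d} · C(k + d, d)` of them. Splitting on whether `n - 1` is used shows that there
are `C(n + 1 - a, a)` sets of size `a` without consecutive elements in `{0, …, n - 1}`, and grouping
the terms with `k + d = a` by the binomial theorem gives the polynomial.
-/

open Finset
open scoped symmDiff

namespace SimpleGraph

variable {V W : Type*} {G : SimpleGraph V} {G' : SimpleGraph W}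

noncomputable def Embedding.induceIso (φ : G ↪g G') {s : Set V} {t : Set W}
    (h : Set.BijOn φ s t) : G.induce s ≃g G'.induce t where
  toEquiv := h.equiv φ
  map_rel_iff' := by simp [Set.BijOn.equiv]

lemma Iso.dist_eq (e : G ≃g G') (u v : V) : G'.dist (e u) (e v) = G.dist u v := by
  by_cases h : G.Reachable u v
  · obtain ⟨p, hp⟩ := h.exists_walk_length_eq_dist
    obtain ⟨q, hq⟩ := (Iso.reachable_iff.mpr h).exists_walk_length_eq_dist
    apply le_antisymm
    · simpa [hp] using dist_le (p.map e.toHom)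
    · simpa [hq] using
        dist_le ((q.map e.symm.toHom).copy (e.symm_apply_apply u) (e.symm_apply_apply v))
  · rw [dist_eq_zero_of_not_reachable h, dist_eq_zero_of_not_reachable (mt Iso.reachable_iff.mp h)]

lemma Iso.distCubeCount_eq (e : G ≃g G') (u : V) (k d : ℕ) :
    distCubeCount G' (e u) k d = distCubeCount G u k d := by
  have hcube (S : Set V) :
      (Nonempty (G'.induce (e '' S) ≃g Qcube k) ∧ distToSet G' (e u) (e '' S) = d) ↔
        (Nonempty (G.induce S ≃g Qcube k) ∧ distToSet G u S = d) := by
    have hiso : G.induce S ≃g G'.induce (e '' S) := e.induce e.injective.injOn.bijOn_image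
    have hdist : distToSet G' (e u) (e '' S) = distToSet G u S := by
      simp only [distToSet, Set.image_image, e.dist_eq]
    rw [hdist]
    exact and_congr_left' ⟨fun ⟨φ⟩ => ⟨hiso.trans φ⟩, fun ⟨φ⟩ => ⟨hiso.symm.trans φ⟩⟩
  have himage : Function.Surjective (e '' · : Set V → Set W) :=
    Set.image_surjective.mpr e.surjective
  rw [distCubeCount, distCubeCount, ← Set.ncard_preimage_of_injective_subset_range
    (Set.image_injective.mpr e.injective) (himage.range_eq ▸ Set.subset_univ _)]
  congr 1
  ext S
  exact hcube S

end SimpleGraph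

lemma IsLowerSet.image_val_preimage_Icc {β : Type*} [Preorder β] {s : Set β} (hs : IsLowerSet s)
    {c w : β} (hw : w ∈ s) :
    Subtype.val '' (Subtype.val ⁻¹' Set.Icc c w : Set s) = Set.Icc c w := by
  rw [Subtype.image_preimage_coe, Set.inter_eq_right]
  exact fun v hv => hs hv.2 hw

def finsetCube (α : Type*) [DecidableEq α] : SimpleGraph (Finset α) where
  Adj s t := #(s ∆ t) = 1
  symm := ⟨fun s t h => by rwa [symmDiff_comm]⟩
  loopless := ⟨fun s h => by simp at h⟩

lemma hammingDist_eq_card_symmDiff {n : ℕ} (u v : Fin n → Bool) :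
    hammingDist u v = #(({i | u i} : Finset (Fin n)) ∆ ({i | v i} : Finset (Fin n))) := by
  unfold hammingDist
  congr 1
  ext i
  simp only [mem_filter, mem_univ, true_and, mem_symmDiff]
  cases u i <;> cases v i <;> decide

def Qcube.isoFinsetCube (n : ℕ) : Qcube n ≃g finsetCube (Fin n) where
  toFun u := {i | u i}
  invFun s i := decide (i ∈ s)
  left_inv u := by funext i; simp
  right_inv s := by ext i; simp
  map_rel_iff' {u v} := by
    change #(({i | u i} : Finset (Fin n)) ∆ ({i | v i} : Finset (Fin n))) = 1 ↔
      hammingDist u v = 1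
    rw [hammingDist_eq_card_symmDiff]

namespace finsetCube

variable {α : Type*} [DecidableEq α]

lemma adj_iff {s t : Finset α} : (finsetCube α).Adj s t ↔ #(s ∆ t) = 1 := Iff.rfl

def translate (b : Finset α) : finsetCube α ≃g finsetCube α where
  toEquiv := Function.Involutive.toPerm (b ∆ ·) fun _ => symmDiff_symmDiff_cancel_left _ _
  map_rel_iff' {s t} := by
    rw [adj_iff, adj_iff]
    change #((b ∆ s) ∆ (b ∆ t)) = 1 ↔ _
    rw [symmDiff_symmDiff_symmDiff_comm, symmDiff_self, bot_symmDiff]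

def mapEmbedding {ι : Type*} [DecidableEq ι] (f : ι ↪ α) : finsetCube ι ↪g finsetCube α where
  toEmbedding := (Finset.mapEmbedding f).toEmbedding
  map_rel_iff' {s t} := by
    simp [adj_iff, map_eq_image, ← image_symmDiff _ _ f.injective,
      card_image_of_injective _ f.injective]

lemma adj_erase {s : Finset α} {a : α} (ha : a ∈ s) : (finsetCube α).Adj s (s.erase a) := by
  rw [adj_iff, symmDiff_of_ge (erase_subset a s), sdiff_erase_self ha, card_singleton]

lemma card_symmDiff_le_length {s t : Finset α} (p : (finsetCube α).Walk s t) :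
    #(s ∆ t) ≤ p.length := by
  induction p with
  | nil => simp
  | @cons s u t hadj _ ih =>
    calc #(s ∆ t) ≤ #(s ∆ u ∪ u ∆ t) := card_le_card (symmDiff_triangle s u t)
      _ ≤ #(s ∆ u) + #(u ∆ t) := card_union_le _ _
      _ ≤ _ := by rw [SimpleGraph.Walk.length_cons, adj_iff.mp hadj]; omega

lemma eq_or_eq_of_adj_erase_of_adj_erase {T Z : Finset α} {p q : α} (hp : p ∈ T) (hq : q ∈ T)
    (hpq : p ≠ q) (hZp : (finsetCube α).Adj Z (T.erase p))
    (hZq : (finsetCube α).Adj Z (T.erase q)) :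
    Z = T ∨ Z = (T.erase p).erase q := by
  obtain ⟨a, ha⟩ := card_eq_one.mp hZp
  obtain ⟨b, hb⟩ := card_eq_one.mp hZq
  have ha' : ∀ x, x ∈ Z ∆ T.erase p ↔ x = a := fun x => by rw [ha, mem_singleton]
  have hb' : ∀ x, x ∈ Z ∆ T.erase q ↔ x = b := fun x => by rw [hb, mem_singleton]
  simp only [mem_symmDiff, mem_erase] at ha' hb'
  rcases eq_or_ne a p with rfl | hap
  · left; ext x; grind
  · right; ext x; simp only [mem_erase]; grind

section Rigidity

variable {ι : Type*} [DecidableEq ι]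

theorem exists_eq_map_of_map_empty (ψ : finsetCube ι ↪g finsetCube α) (hψ : ψ ∅ = ∅) :
    ∃ f : ι ↪ α, ∀ s, ψ s = s.map f := by
  have hsingleton (a : ι) : ∃ b, ψ {a} = {b} := by
    have := ψ.map_adj_iff.mpr (show (finsetCube ι).Adj ∅ {a} by
      rw [adj_iff, ← bot_eq_empty, bot_symmDiff, card_singleton])
    rwa [hψ, adj_iff, ← bot_eq_empty, bot_symmDiff, card_eq_one] at this
  choose f hf using hsingleton
  have hf_inj : Function.Injective f := fun a a' h =>
    singleton_injective (ψ.injective (by rw [hf, hf, h]))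
  refine ⟨⟨f, hf_inj⟩, fun s => ?_⟩
  induction s using Finset.strongInduction with
  | H s ih =>
    rcases le_or_gt #s 1 with hs | hs
    · rcases Nat.le_one_iff_eq_zero_or_eq_one.mp hs with hs | hs
      · simp [card_eq_zero.mp hs, hψ]
      · obtain ⟨a, rfl⟩ := card_eq_one.mp hs
        simp [hf]
    obtain ⟨p, hp, q, hq, hpq⟩ := one_lt_card.mp hs
    have ih_erase {a} (ha : a ∈ s) : ψ (s.erase a) = (s.map ⟨f, hf_inj⟩).erase (f a) := by
      rw [ih _ (erase_ssubset ha), map_erase]; rfl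
    -- `ψ s` is a common neighbour of `ψ (s.erase p)` and `ψ (s.erase q)`; the only other one is
    -- `ψ ((s.erase p).erase q)`, which injectivity rules out.
    rcases eq_or_eq_of_adj_erase_of_adj_erase (mem_map_of_mem _ hp) (mem_map_of_mem _ hq)
        (hf_inj.ne hpq) (ih_erase hp ▸ ψ.map_adj_iff.mpr (adj_erase hp))
        (ih_erase hq ▸ ψ.map_adj_iff.mpr (adj_erase hq)) with h | h
    · exact h
    · have hq' : q ∈ s.erase p := mem_erase.mpr ⟨hpq.symm, hq⟩
      have : ψ s = ψ ((s.erase p).erase q) := by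
        rw [h, ih _ ((erase_ssubset hq').trans (erase_ssubset hp)), map_erase, map_erase]
      have := ψ.injective this ▸ hp
      simp at this

theorem exists_eq_symmDiff_map (ψ : finsetCube ι ↪g finsetCube α) :
    ∃ f : ι ↪ α, ∀ s, ψ s = ψ ∅ ∆ s.map f := by
  obtain ⟨f, hf⟩ := exists_eq_map_of_map_empty ((translate (ψ ∅)).toEmbedding.comp ψ)
    (symmDiff_self (ψ ∅))
  refine ⟨f, fun s => ?_⟩
  rw [← hf s]
  exact (symmDiff_symmDiff_cancel_left _ _).symm

end Rigidity

lemma range_symmDiff_map {ι : Type*} [Fintype ι] (b : Finset α) (f : ι ↪ α) :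
    Set.range (fun s : Finset ι => b ∆ s.map f) = Set.Icc (b \ univ.map f) (b ∪ univ.map f) := by
  ext t
  constructor
  · rintro ⟨s, rfl⟩
    constructor <;> intro x <;>
      simp only [mem_sdiff, mem_union, mem_symmDiff, mem_map, mem_univ, true_and] <;> grind
  · rintro ⟨hlo, hhi⟩
    obtain ⟨s, -, hs⟩ := subset_map_iff.mp (show b ∆ t ⊆ univ.map f by
      intro x hx
      rw [mem_symmDiff] at hx
      by_contra hxF
      rcases hx with ⟨hxb, hxt⟩ | ⟨hxt, hxb⟩
      · exact hxt (hlo (mem_sdiff.mpr ⟨hxb, hxF⟩))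
      · exact (mem_union.mp (hhi hxt)).elim hxb hxF)
    exact ⟨s, show b ∆ s.map f = t by rw [← hs, symmDiff_symmDiff_cancel_left]⟩

theorem nonempty_induce_iso_qcube_iff {S : Set (Finset α)} {k : ℕ} :
    Nonempty ((finsetCube α).induce S ≃g Qcube k) ↔
      ∃ c w, c ⊆ w ∧ #(w \ c) = k ∧ S = Set.Icc c w := by
  constructor
  · rintro ⟨φ⟩
    let ψ : finsetCube (Fin k) ↪g finsetCube α :=
      (SimpleGraph.Embedding.induce S).comp (φ.symm.comp (Qcube.isoFinsetCube k).symm).toEmbedding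
    have hψ : Set.range ψ = S := by
      simp only [ψ, SimpleGraph.Embedding.coe_comp, Set.range_comp, RelIso.coe_toRelEmbedding,
        EquivLike.range_eq_univ, Set.image_univ]
      exact Subtype.range_coe
    obtain ⟨f, hf⟩ := exists_eq_symmDiff_map ψ
    refine ⟨ψ ∅ \ univ.map f, ψ ∅ ∪ univ.map f, sdiff_subset.trans subset_union_left, ?_, ?_⟩
    · have : (ψ ∅ ∪ univ.map f) \ (ψ ∅ \ univ.map f) = univ.map f := by
        ext; simp only [mem_sdiff, mem_union]; tauto
      rw [this, card_map, card_univ, Fintype.card_fin]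
    · rw [← hψ, ← range_symmDiff_map]
      exact congrArg Set.range (funext hf)
  · rintro ⟨c, w, hcw, rfl, rfl⟩
    let f : Fin #(w \ c) ↪ α :=
      (w \ c).equivFin.symm.toEmbedding.trans (Function.Embedding.subtype _)
    let ψ := (translate c).toEmbedding.comp (mapEmbedding f)
    have hψ : Set.range ψ = Set.Icc c w := by
      have hf : univ.map f = w \ c := by
        ext x
        simp only [mem_map, mem_univ, true_and]
        exact ⟨by rintro ⟨a, rfl⟩; exact ((w \ c).equivFin.symm a).2,
          fun hx => ⟨(w \ c).equivFin ⟨x, hx⟩, by simp [f]⟩⟩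
      have := range_symmDiff_map c f
      rw [hf, sdiff_eq_self_of_disjoint disjoint_sdiff, union_sdiff_of_subset hcw] at this
      exact this
    rw [← hψ]
    exact ⟨ψ.isoInduceRange.symm.trans (Qcube.isoFinsetCube _).symm⟩

section LowerSet

variable {𝒜 : Finset (Finset α)}

lemma dist_induce_empty (h𝒜 : IsLowerSet (𝒜 : Set (Finset α))) (h0 : ∅ ∈ 𝒜)
    (s : (𝒜 : Set (Finset α))) : ((finsetCube α).induce 𝒜).dist ⟨∅, h0⟩ s = #s.val := by
  obtain ⟨s, hs⟩ := s
  have hwalk : ∃ p : ((finsetCube α).induce 𝒜).Walk ⟨∅, h0⟩ ⟨s, hs⟩, p.length = #s := by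
    induction s using Finset.induction_on with
    | empty => exact ⟨.nil, rfl⟩
    | @insert a t ha ih =>
      have ht : t ∈ 𝒜 := h𝒜 (subset_insert a t) hs
      obtain ⟨p, hp⟩ := ih ht
      have hadj : ((finsetCube α).induce 𝒜).Adj ⟨t, ht⟩ ⟨insert a t, hs⟩ := by
        simpa [erase_insert ha] using (adj_erase (mem_insert_self a t)).symm
      exact ⟨p.concat hadj, by rw [SimpleGraph.Walk.length_concat, hp, card_insert_of_notMem ha]⟩
  obtain ⟨p₀, hp₀⟩ := hwalk
  obtain ⟨p, hp⟩ := SimpleGraph.Reachable.exists_walk_length_eq_dist ⟨p₀⟩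
  refine le_antisymm (hp₀ ▸ SimpleGraph.dist_le p₀) ?_
  calc #s = #((∅ : Finset α) ∆ s) := by rw [← bot_eq_empty, bot_symmDiff]
    _ ≤ (p.map (SimpleGraph.Embedding.induce _).toHom).length := card_symmDiff_le_length _
    _ = _ := by rw [SimpleGraph.Walk.length_map, hp]

lemma distToSet_induce_empty (h𝒜 : IsLowerSet (𝒜 : Set (Finset α))) (h0 : ∅ ∈ 𝒜)
    {S : Set (𝒜 : Set (Finset α))} {c w : Finset α} (hcw : c ⊆ w)
    (hS : Subtype.val '' S = Set.Icc c w) :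
    distToSet ((finsetCube α).induce 𝒜) ⟨∅, h0⟩ S = #c := by
  have : ((finsetCube α).induce 𝒜).dist ⟨∅, h0⟩ '' S = card '' Set.Icc c w := by
    rw [← hS, Set.image_image]
    exact Set.image_congr fun s _ => dist_induce_empty h𝒜 h0 s
  rw [distToSet, this]
  exact IsLeast.csInf_eq
    ⟨⟨c, ⟨le_rfl, hcw⟩, rfl⟩, by rintro _ ⟨v, hv, rfl⟩; exact card_le_card hv.1⟩

theorem isCube_and_distToSet_eq_iff (h𝒜 : IsLowerSet (𝒜 : Set (Finset α))) (h0 : ∅ ∈ 𝒜)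
    (S : Set (𝒜 : Set (Finset α))) (k d : ℕ) :
    (Nonempty (((finsetCube α).induce 𝒜).induce S ≃g Qcube k) ∧
        distToSet ((finsetCube α).induce 𝒜) ⟨∅, h0⟩ S = d) ↔
      ∃ w ∈ 𝒜 # (k + d), ∃ c ∈ powersetCard d w, S = Subtype.val ⁻¹' Set.Icc c w := by
  have hiso : Nonempty (((finsetCube α).induce 𝒜).induce S ≃g Qcube k) ↔
      Nonempty ((finsetCube α).induce (Subtype.val '' S) ≃g Qcube k) :=
    let e := (SimpleGraph.Embedding.induce _).induceIso Subtype.val_injective.injOn.bijOn_image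
    ⟨fun ⟨φ⟩ => ⟨e.symm.trans φ⟩, fun ⟨φ⟩ => ⟨e.trans φ⟩⟩
  rw [hiso, nonempty_induce_iso_qcube_iff]
  constructor
  · rintro ⟨⟨c, w, hcw, rfl, hS⟩, rfl⟩
    have hw : w ∈ 𝒜 := by
      obtain ⟨v, -, hv⟩ := hS.symm ▸ Set.right_mem_Icc.mpr hcw
      exact hv ▸ v.2
    refine ⟨w, mem_slice.mpr ⟨hw, ?_⟩, c, mem_powersetCard.mpr ⟨hcw, ?_⟩, ?_⟩
    · rw [distToSet_induce_empty h𝒜 h0 hcw hS, card_sdiff_add_card_eq_card hcw]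
    · rw [distToSet_induce_empty h𝒜 h0 hcw hS]
    · rw [← hS, Set.preimage_image_eq _ Subtype.val_injective]
  · rintro ⟨w, hw, c, hc, rfl⟩
    rw [mem_slice] at hw
    rw [mem_powersetCard] at hc
    have hS := h𝒜.image_val_preimage_Icc (c := c) hw.1
    refine ⟨⟨c, w, hc.1, ?_, hS⟩, ?_⟩
    · rw [card_sdiff_of_subset hc.1, hw.2, hc.2]; omega
    · rw [distToSet_induce_empty h𝒜 h0 hc.1 hS, hc.2]

theorem distCubeCount_induce_of_isLowerSet (h𝒜 : IsLowerSet (𝒜 : Set (Finset α)))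
    (h0 : ∅ ∈ 𝒜) (k d : ℕ) :
    distCubeCount ((finsetCube α).induce 𝒜) ⟨∅, h0⟩ k d = #(𝒜 # (k + d)) * (k + d).choose d := by
  let cube (p : Σ _ : Finset α, Finset α) : Set (𝒜 : Set (Finset α)) :=
    Subtype.val ⁻¹' Set.Icc p.2 p.1
  let P := (𝒜 # (k + d)).sigma fun w => powersetCard d w
  have hcubes : {S | Nonempty (((finsetCube α).induce 𝒜).induce S ≃g Qcube k) ∧
      distToSet ((finsetCube α).induce 𝒜) ⟨∅, h0⟩ S = d} = cube '' P := by
    ext S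
    simp only [Set.mem_ofPred_eq, isCube_and_distToSet_eq_iff h𝒜 h0, Set.mem_image, coe_sigma,
      Set.mem_sigma_iff, mem_coe, Sigma.exists, P, cube]
    grind
  have hinj : Set.InjOn cube P := by
    rintro ⟨w, c⟩ hp ⟨w', c'⟩ hq h
    simp only [coe_sigma, Set.mem_sigma_iff, mem_coe, mem_slice, mem_powersetCard, P] at hp hq
    have := congrArg (Subtype.val '' ·) h
    simp only [cube, h𝒜.image_val_preimage_Icc hp.1.1, h𝒜.image_val_preimage_Icc hq.1.1] at this
    obtain ⟨rfl, rfl⟩ := (Set.Icc_eq_Icc_iff hp.2.1).mp this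
    rfl
  rw [distCubeCount, hcubes, hinj.ncard_image, Set.ncard_coe_finset, card_sigma,
    sum_congr rfl fun w hw => by rw [card_powersetCard, (mem_slice.mp hw).2], sum_const,
    smul_eq_mul]

end LowerSet

end finsetCube

def sparseSets (n : ℕ) : Finset (Finset ℕ) :=
  (range n).powerset.filter fun s => ∀ i ∈ s, i + 1 ∉ s

lemma mem_sparseSets {n : ℕ} {s : Finset ℕ} :
    s ∈ sparseSets n ↔ s ⊆ range n ∧ ∀ i ∈ s, i + 1 ∉ s := by
  rw [sparseSets, mem_filter, mem_powerset]

lemma isLowerSet_sparseSets (n : ℕ) : IsLowerSet (sparseSets n : Set (Finset ℕ)) := by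
  intro s t hts hs
  rw [mem_coe, mem_sparseSets] at hs ⊢
  exact ⟨hts.trans hs.1, fun i hi hi' => hs.2 i (hts hi) (hts hi')⟩

lemma empty_mem_sparseSets (n : ℕ) : ∅ ∈ sparseSets n :=
  mem_sparseSets.mpr ⟨empty_subset _, fun _ h => absurd h (notMem_empty _)⟩

def fibonacciEmbedding (n : ℕ) : Qcube n ↪g finsetCube ℕ :=
  (finsetCube.mapEmbedding Fin.valEmbedding).comp (Qcube.isoFinsetCube n).toEmbedding

lemma mem_fibonacciEmbedding {n : ℕ} {u : Fin n → Bool} {i : ℕ} :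
    i ∈ fibonacciEmbedding n u ↔ ∃ h : i < n, u ⟨i, h⟩ := by
  simp [fibonacciEmbedding, Qcube.isoFinsetCube, finsetCube.mapEmbedding, Fin.exists_iff]

lemma bijOn_fibonacciEmbedding (n : ℕ) :
    Set.BijOn (fibonacciEmbedding n) (fibSet n) (sparseSets n) := by
  refine ⟨fun u hu => ?_, (fibonacciEmbedding n).injective.injOn, fun s hs => ?_⟩
  · rw [mem_coe, mem_sparseSets]
    refine ⟨fun i hi => mem_range.mpr (mem_fibonacciEmbedding.mp hi).1, fun i hi hi' => ?_⟩
    obtain ⟨h, hui⟩ := mem_fibonacciEmbedding.mp hi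
    obtain ⟨h', hui'⟩ := mem_fibonacciEmbedding.mp hi'
    exact hu ⟨i, h⟩ ⟨i + 1, h'⟩ rfl ⟨hui, hui'⟩
  · rw [mem_coe, mem_sparseSets] at hs
    refine ⟨fun i => decide (↑i ∈ s), fun i j hij hij' => ?_, ?_⟩
    · simp only [decide_eq_true_eq] at hij'
      exact hs.2 i hij'.1 (hij ▸ hij'.2)
    · ext i
      rw [mem_fibonacciEmbedding]
      simp only [decide_eq_true_eq]
      exact ⟨fun ⟨_, hi⟩ => hi, fun hi => ⟨mem_range.mp (hs.1 hi), hi⟩⟩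

noncomputable def fibonacciCubeIso (n : ℕ) :
    (Qcube n).induce (fibSet n) ≃g (finsetCube ℕ).induce (sparseSets n : Set (Finset ℕ)) :=
  (fibonacciEmbedding n).induceIso (bijOn_fibonacciEmbedding n)

lemma distCubeCount_fibonacciCube (n k d : ℕ) :
    distCubeCount ((Qcube n).induce (fibSet n)) ⟨fun _ => false, zero_mem_fibSet n⟩ k d =
      #((sparseSets n) # (k + d)) * (k + d).choose d := by
  have h0 : fibonacciCubeIso n ⟨fun _ => false, zero_mem_fibSet n⟩ =
      ⟨∅, empty_mem_sparseSets n⟩ :=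
    Subtype.ext <| eq_empty_of_forall_notMem fun i hi => by
      simpa using mem_fibonacciEmbedding.mp hi
  rw [← SimpleGraph.Iso.distCubeCount_eq (fibonacciCubeIso n), h0,
    finsetCube.distCubeCount_induce_of_isLowerSet (isLowerSet_sparseSets n)]

lemma mem_sparseSets_slice {n a : ℕ} {s : Finset ℕ} :
    s ∈ (sparseSets n) # a ↔ (∀ i ∈ s, i < n ∧ i + 1 ∉ s) ∧ #s = a := by
  simp only [mem_slice, mem_sparseSets, subset_iff, mem_range]
  grind

lemma sparseSets_slice_filter_notMem (m a : ℕ) :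
    ((sparseSets (m + 2)) # a).filter (m + 1 ∉ ·) = (sparseSets (m + 1)) # a := by
  ext s
  simp only [mem_filter, mem_sparseSets_slice]
  grind

lemma card_sparseSets_slice_filter_mem (m a : ℕ) :
    #(((sparseSets (m + 2)) # (a + 1)).filter (m + 1 ∈ ·)) = #((sparseSets m) # a) := by
  refine card_nbij' (·.erase (m + 1)) (insert (m + 1)) ?_ ?_ ?_ ?_
  · intro s hs
    simp only [coe_filter, Set.mem_ofPred_eq, mem_coe, mem_sparseSets_slice] at hs ⊢
    refine ⟨fun i hi => ?_, by rw [card_erase_of_mem hs.2, hs.1.2, Nat.add_sub_cancel]⟩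
    simp only [mem_erase] at hi ⊢
    grind
  · intro t ht
    simp only [coe_filter, Set.mem_ofPred_eq, mem_coe, mem_sparseSets_slice] at ht ⊢
    have hm : m + 1 ∉ t := fun h => by grind
    refine ⟨⟨fun i hi => ?_, by rw [card_insert_of_notMem hm, ht.2]⟩, mem_insert_self _ _⟩
    simp only [mem_insert] at hi ⊢
    grind
  · intro s hs
    exact insert_erase (mem_filter.mp hs).2
  · intro t ht
    refine erase_insert fun h => ?_
    have := ((mem_sparseSets_slice.mp ht).1 _ h).1
    omega

lemma card_sparseSets_slice_succ_succ (m a : ℕ) :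
    #((sparseSets (m + 2)) # (a + 1)) =
      #((sparseSets m) # a) + #((sparseSets (m + 1)) # (a + 1)) := by
  rw [← card_filter_add_card_filter_not (p := (m + 1 ∈ ·)), card_sparseSets_slice_filter_mem,
    sparseSets_slice_filter_notMem]

lemma sparseSets_slice_zero (n : ℕ) : (sparseSets n) # 0 = {∅} := by
  ext s
  simp only [mem_sparseSets_slice, card_eq_zero, mem_singleton]
  exact ⟨And.right, fun h => ⟨by simp [h], h⟩⟩

lemma sparseSets_slice_eq_empty {n a : ℕ} (h : n < a) : (sparseSets n) # a = ∅ := by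
  refine eq_empty_of_forall_notMem fun s hs => ?_
  have hsub : s ⊆ range n := fun i hi => mem_range.mpr ((mem_sparseSets_slice.mp hs).1 i hi).1
  have := card_le_card hsub
  rw [card_range, (mem_sparseSets_slice.mp hs).2] at this
  omega

theorem card_sparseSets_slice : ∀ n a : ℕ, #((sparseSets n) # a) = (n + 1 - a).choose a
  | _, 0 => by rw [sparseSets_slice_zero, card_singleton, Nat.choose_zero_right]
  | 0, _ + 1 | 1, _ + 2 => by
    rw [sparseSets_slice_eq_empty (by omega), card_empty, Nat.choose_eq_zero_of_lt (by omega)]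
  | 1, 1 => rfl
  | m + 2, a + 1 => by
    rw [card_sparseSets_slice_succ_succ, card_sparseSets_slice m a,
      card_sparseSets_slice (m + 1) (a + 1)]
    rcases le_or_gt a (m + 1) with h | h
    · rw [show m + 2 + 1 - (a + 1) = m + 1 - a + 1 by omega,
        show m + 1 + 1 - (a + 1) = m + 1 - a by omega, Nat.choose_succ_succ']
    · rw [show m + 1 - a = 0 by omega, show m + 1 + 1 - (a + 1) = 0 by omega,
        show m + 2 + 1 - (a + 1) = 0 by omega, Nat.choose_eq_zero_of_lt (by omega : 0 < a),
        Nat.choose_eq_zero_of_lt (by omega : 0 < a + 1)]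

theorem sum_choose_mul_pow_eq_sum_add_pow {R : Type*} [CommSemiring R] (g : ℕ → R) {A N : ℕ}
    (hAN : A ≤ N) (hg : ∀ a, A < a → g a = 0) (x y : R) :
    ∑ k ∈ range (N + 1), ∑ d ∈ range (N + 1), g (k + d) * (k + d).choose d * x ^ k * y ^ d =
      ∑ a ∈ range (A + 1), g a * (x + y) ^ a := by
  have hexpand (a : ℕ) : g a * (x + y) ^ a =
      ∑ p ∈ antidiagonal a, g (p.1 + p.2) * (p.1 + p.2).choose p.2 * x ^ p.1 * y ^ p.2 := by
    rw [(Commute.all x y).add_pow', mul_sum]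
    refine sum_congr rfl fun p hp => ?_
    rw [HasAntidiagonal.mem_antidiagonal] at hp
    subst hp
    rw [nsmul_eq_mul, Nat.choose_symm_add]
    ring
  simp_rw [hexpand]
  rw [← sum_product', sum_sigma']
  symm
  refine sum_of_injOn Sigma.snd ?_ ?_ ?_ fun _ _ => rfl
  · rintro ⟨a, p⟩ hp ⟨b, q⟩ hq (rfl : p = q)
    simp only [coe_sigma, Set.mem_sigma_iff, mem_coe, HasAntidiagonal.mem_antidiagonal] at hp hq
    rw [← hp.2, ← hq.2]
  · rintro ⟨a, p⟩ hp
    simp only [coe_sigma, Set.mem_sigma_iff, mem_coe, mem_range,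
      HasAntidiagonal.mem_antidiagonal] at hp
    simp only [coe_product, Set.mem_prod, mem_coe, mem_range]
    omega
  · rintro ⟨k, d⟩ - hkd
    rw [hg (k + d), zero_mul, zero_mul, zero_mul]
    by_contra! h
    exact hkd ⟨⟨k + d, (k, d)⟩, by
      simp only [coe_sigma, Set.mem_sigma_iff, mem_coe, mem_range, HasAntidiagonal.mem_antidiagonal,
        and_true]
      omega, rfl⟩

theorem distCubePolynomial_of_Fibonacci_cube (n : ℕ) (hn : 1 ≤ n) :
    (∀ x y : ℝ,
      ∑ k ∈ Finset.range (2 ^ n + 1), ∑ d ∈ Finset.range (2 ^ n + 1),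
        (distCubeCount ((Qcube n).induce (fibSet n)) ⟨fun _ => false, zero_mem_fibSet n⟩
            k d : ℝ) * x ^ k * y ^ d =
      ∑ a ∈ Finset.range ((n + 1) / 2 + 1), ((n - a + 1).choose a : ℝ) * (x + y) ^ a)
    ∧ ∀ k d : ℕ,
      distCubeCount ((Qcube n).induce (fibSet n)) ⟨fun _ => false, zero_mem_fibSet n⟩ k d =
        (n - (k + d) + 1).choose (k + d) * (k + d).choose d := by
  have hchoose (a : ℕ) : (n + 1 - a).choose a = (n - a + 1).choose a := by
    rcases le_or_gt a n with h | h
    · rw [Nat.sub_add_comm h]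
    · rw [Nat.choose_eq_zero_of_lt (by omega), Nat.choose_eq_zero_of_lt (by omega)]
  have hcount (k d : ℕ) :
      distCubeCount ((Qcube n).induce (fibSet n)) ⟨fun _ => false, zero_mem_fibSet n⟩ k d =
        (n - (k + d) + 1).choose (k + d) * (k + d).choose d := by
    rw [distCubeCount_fibonacciCube, card_sparseSets_slice, hchoose]
  refine ⟨fun x y => ?_, hcount⟩
  simp only [hcount, Nat.cast_mul]
  refine sum_choose_mul_pow_eq_sum_add_pow (fun a => ((n - a + 1).choose a : ℝ)) ?_ ?_ x y
  · have := Nat.lt_two_pow_self (n := n)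
    omega
  · intro a ha
    rw [Nat.choose_eq_zero_of_lt (by omega), Nat.cast_zero]
end

section
/- For every n ≥ 2, the number of vertices of the Lucas cube Λ_n at distance k from the vertex 0^n equals 2·binom(n−k, k) − binom(n−k−1, k); that is, W_{Λ_n,0^n}(x) = Σ_{k=0}^{⌊n/2⌋} [2·binom(n−k, k) − binom(n−k−1, k)] x^k. -/
def lucasSet (n : ℕ) : Set (Fin n → Bool) :=
  {u | u ∈ fibSet n ∧ ∀ i j : Fin n, (i : ℕ) = 0 → (j : ℕ) = n - 1 → ¬(u i = true ∧ u j = true)}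

lemma zero_mem_lucasSet (n : ℕ) : (fun _ => false) ∈ lucasSet n := by
  refine ⟨zero_mem_fibSet n, ?_⟩
  intro i j _ _ h
  simp at h


/-!
In an induced subgraph of `Qₙ` on a down-closed set of words, the distance from `0ⁿ` to `u` is the
weight of `u` (its number of ones): the Hamming distance bounds it from below, and switching the
ones of `u` off one at a time gives a path that stays inside the set. Lucas words are down-closed,
so `w_k` is the number of Lucas words of weight `k`. Those starting with `0` are `0v` with `v` a
Fibonacci word of length `n - 1`, those starting with `1` are `1v0` with `v` a Fibonacci word of
length `n - 2` not starting with `1`. The same first-letter recursion counts the Fibonacci words of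
length `m` and weight `k` as `C(m + 1 - k, k)`, and those not starting with `1` as `C(m - k, k)`;
Pascal's rule turns `C(n - k, k) + C(n - k - 1, k - 1)` into `2 C(n - k, k) - C(n - k - 1, k)`.
-/

namespace LucasCube

variable {m n : ℕ}

def weight (u : Fin m → Bool) : ℕ := ∑ i, (u i).toNat

lemma weight_cons (b : Bool) (v : Fin m → Bool) :
    weight (Fin.cons b v : Fin (m + 1) → Bool) = b.toNat + weight v := by
  simp [weight, Fin.sum_univ_succ]

lemma weight_snoc (v : Fin m → Bool) (b : Bool) :
    weight (Fin.snoc v b : Fin (m + 1) → Bool) = weight v + b.toNat := by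
  simp [weight, Fin.sum_univ_castSucc]

lemma weight_le (u : Fin m → Bool) : weight u ≤ m := by
  simpa [weight] using Finset.sum_le_card_nsmul Finset.univ (fun i => (u i).toNat) 1
    (fun i _ => Bool.toNat_le _)

lemma weight_eq_zero_iff {u : Fin m → Bool} : weight u = 0 ↔ u = fun _ => false := by
  simp [weight, Finset.sum_eq_zero_iff, funext_iff]

lemma weight_update_false {v : Fin m → Bool} {i : Fin m} (hi : v i = true) :
    weight (Function.update v i false) + 1 = weight v := by
  rw [weight, weight, ← Finset.add_sum_erase _ _ (Finset.mem_univ i),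
    ← Finset.add_sum_erase _ _ (Finset.mem_univ i), Function.update_self, hi,
    Finset.sum_congr rfl fun j hj => by rw [Function.update_of_ne (Finset.ne_of_mem_erase hj)]]
  simp only [Bool.toNat_false, Bool.toNat_true]
  omega

lemma hammingDist_false_left (u : Fin m → Bool) : hammingDist (fun _ => false) u = weight u := by
  rw [hammingDist, Finset.card_eq_sum_ones, Finset.sum_filter, weight]
  congr! 1 with i
  cases u i <;> rfl

lemma hammingDist_update_false {v : Fin m → Bool} {i : Fin m} (hi : v i = true) :
    hammingDist (Function.update v i false) v = 1 := by
  refine Finset.card_eq_one.mpr ⟨i, Finset.ext fun j => ?_⟩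
  by_cases hj : j = i
  · subst hj
    simp [hi]
  · simp [hj]

lemma hammingDist_le_length {u v : Fin n → Bool} (p : (Qcube n).Walk u v) :
    hammingDist u v ≤ p.length := by
  induction p with
  | nil => simp
  | @cons a b c hab _ ih =>
    have hab : hammingDist a b = 1 := hab
    have := hammingDist_triangle a b c
    rw [SimpleGraph.Walk.length_cons]
    omega

lemma hammingDist_le_edist_induce (S : Set (Fin n → Bool)) (u v : S) :
    (hammingDist u.1 v.1 : ℕ∞) ≤ ((Qcube n).induce S).edist u v := by
  refine le_sInf ?_
  rintro _ ⟨p, rfl⟩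
  have := hammingDist_le_length (p.map (SimpleGraph.Embedding.induce S).toHom)
  rw [SimpleGraph.Walk.length_map] at this
  exact Nat.cast_le.mpr this

lemma edist_induce_le_weight {S : Set (Fin n → Bool)} (hS : IsLowerSet S)
    (h0 : (fun _ => false) ∈ S) (v : S) :
    ((Qcube n).induce S).edist ⟨_, h0⟩ v ≤ weight v.1 := by
  obtain ⟨v, hv⟩ := v
  induction hk : weight v generalizing v with
  | zero =>
    obtain rfl := weight_eq_zero_iff.mp hk
    simp
  | succ k ih =>
    obtain ⟨i, hi⟩ : ∃ i, v i = true := by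
      by_contra! h
      simp [weight_eq_zero_iff.mpr (funext fun i => by simpa using h i)] at hk
    have hv' : Function.update v i false ∈ S := hS (by simp) hv
    have hadj : ((Qcube n).induce S).Adj ⟨_, hv'⟩ ⟨v, hv⟩ := hammingDist_update_false hi
    calc _ ≤ _ := SimpleGraph.edist_triangle
      _ ≤ (k : ℕ∞) + 1 := by
        gcongr
        · exact ih _ hv' (by have := weight_update_false hi; omega)
        · exact (SimpleGraph.edist_eq_one_iff_adj.mpr hadj).le
      _ = (k + 1 : ℕ) := by push_cast; rfl

lemma dist_induce_eq_weight {S : Set (Fin n → Bool)} (hS : IsLowerSet S)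
    (h0 : (fun _ => false) ∈ S) (v : S) :
    ((Qcube n).induce S).dist ⟨_, h0⟩ v = weight v.1 := by
  have hle := hammingDist_le_edist_induce S ⟨_, h0⟩ v
  rw [hammingDist_false_left] at hle
  rw [SimpleGraph.dist, le_antisymm (edist_induce_le_weight hS h0 v) hle, ENat.toNat_natCast]

noncomputable def weightCount (S : Set (Fin m → Bool)) (k : ℕ) : ℕ :=
  {u | u ∈ S ∧ weight u = k}.ncard

lemma wCount_induce_eq_weightCount {S : Set (Fin n → Bool)} (hS : IsLowerSet S)
    (h0 : (fun _ => false) ∈ S) (k : ℕ) :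
    wCount ((Qcube n).induce S) ⟨_, h0⟩ k = weightCount S k := by
  simp_rw [wCount, dist_induce_eq_weight hS h0]
  rw [weightCount, ← Set.ncard_image_of_injective _ Subtype.val_injective]
  congr 1
  ext u
  simp [and_comm]

lemma weightCount_zero {S : Set (Fin m → Bool)} (h0 : (fun _ => false) ∈ S) :
    weightCount S 0 = 1 := by
  rw [weightCount, Set.ncard_eq_one]
  refine ⟨fun _ => false, Set.ext fun u => ?_⟩
  simp only [Set.mem_ofPred_eq, weight_eq_zero_iff, Set.mem_singleton_iff, and_iff_right_iff_imp]
  rintro rfl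
  exact h0

lemma weightCount_eq_zero_of_lt (S : Set (Fin m → Bool)) {k : ℕ} (hk : m < k) :
    weightCount S k = 0 := by
  rw [weightCount, Set.ncard_eq_zero]
  exact Set.eq_empty_of_forall_notMem fun u hu => (weight_le u).not_gt (hu.2 ▸ hk)

lemma weightCount_image {S : Set (Fin m → Bool)} {f : (Fin m → Bool) → Fin n → Bool}
    (hf : f.Injective) (hw : ∀ u, weight (f u) = weight u) (k : ℕ) :
    weightCount (f '' S) k = weightCount S k := by
  rw [weightCount, weightCount, ← Set.ncard_image_of_injective _ hf]
  congr 1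
  ext u
  constructor
  · rintro ⟨⟨v, hv, rfl⟩, hk⟩
    exact ⟨v, ⟨hv, hw v ▸ hk⟩, rfl⟩
  · rintro ⟨v, ⟨hv, hk⟩, rfl⟩
    exact ⟨⟨v, hv, rfl⟩, (hw v).trans hk⟩

lemma weightCount_succ (S : Set (Fin (m + 1) → Bool)) (k : ℕ) :
    weightCount S (k + 1) =
      weightCount {v | Fin.cons false v ∈ S} (k + 1) + weightCount {v | Fin.cons true v ∈ S} k := by
  have hsplit : {u | u ∈ S ∧ weight u = k + 1} =
      Fin.cons false '' {v | Fin.cons false v ∈ S ∧ weight v = k + 1} ∪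
        Fin.cons true '' {v | Fin.cons true v ∈ S ∧ weight v = k} := by
    ext u
    obtain ⟨b, v, rfl⟩ : ∃ b v, u = Fin.cons b v := ⟨u 0, Fin.tail u, (Fin.cons_self_tail u).symm⟩
    cases b <;> simp [weight_cons, add_comm]
  rw [weightCount, hsplit, Set.ncard_union_eq,
    Set.ncard_image_of_injective _ (Fin.cons_right_injective _),
    Set.ncard_image_of_injective _ (Fin.cons_right_injective _)]
  · rfl
  · rw [Set.disjoint_left]
    rintro _ ⟨v, -, rfl⟩ ⟨w, -, h⟩
    simpa using congrFun h 0

lemma cons_mem_fibSet_iff (b : Bool) (v : Fin m → Bool) :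
    (Fin.cons b v : Fin (m + 1) → Bool) ∈ fibSet (m + 1) ↔
      (∀ j : Fin m, (j : ℕ) = 0 → ¬(b = true ∧ v j = true)) ∧ v ∈ fibSet m := by
  simp only [fibSet, Set.mem_ofPred_eq, Fin.forall_fin_succ, Fin.cons_zero, Fin.cons_succ,
    Fin.val_zero, Fin.val_succ]
  simp

lemma cons_false_mem_fibSet_iff (v : Fin m → Bool) :
    (Fin.cons false v : Fin (m + 1) → Bool) ∈ fibSet (m + 1) ↔ v ∈ fibSet m := by
  simp [cons_mem_fibSet_iff]

lemma cons_true_cons_mem_fibSet_iff (b : Bool) (w : Fin m → Bool) :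
    (Fin.cons true (Fin.cons b w : Fin (m + 1) → Bool) : Fin (m + 2) → Bool) ∈ fibSet (m + 2) ↔
      b = false ∧ w ∈ fibSet m := by
  rw [cons_mem_fibSet_iff, cons_mem_fibSet_iff, Fin.forall_fin_succ]
  cases b <;> simp

lemma cons_true_false_mem_fibSet :
    (Fin.cons true (fun _ => false) : Fin (m + 1) → Bool) ∈ fibSet (m + 1) := by
  simp [cons_mem_fibSet_iff, zero_mem_fibSet]

lemma snoc_false_mem_fibSet_iff (v : Fin m → Bool) :
    (Fin.snoc v false : Fin (m + 1) → Bool) ∈ fibSet (m + 1) ↔ v ∈ fibSet m := by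
  simp only [fibSet, Set.mem_ofPred_eq, Fin.forall_fin_succ', Fin.snoc_castSucc, Fin.snoc_last,
    Fin.val_last, Fin.val_castSucc]
  simp

theorem succ_sub_choose_succ (m k : ℕ) :
    (m + 1 - k).choose (k + 1) = (m - k).choose (k + 1) + (m - k).choose k := by
  rcases le_or_gt k m with hk | hk
  · rw [Nat.sub_add_comm hk, Nat.choose_succ_succ', add_comm]
  · simp [Nat.sub_eq_zero_of_le hk, Nat.sub_eq_zero_of_le hk.le,
      Nat.choose_eq_zero_of_lt (show 0 < k by omega)]

theorem weightCount_fibSet_and_cons_true (m k : ℕ) :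
    weightCount (fibSet m) k = (m + 1 - k).choose k ∧
      weightCount {v : Fin m → Bool | Fin.cons true v ∈ fibSet (m + 1)} k = (m - k).choose k := by
  induction m generalizing k with
  | zero =>
    rcases k with _ | k
    · simp [weightCount_zero, zero_mem_fibSet, cons_true_false_mem_fibSet]
    · simp [weightCount_eq_zero_of_lt]
  | succ m ih =>
    refine ⟨?_, ?_⟩
    · rcases k with _ | k
      · simp [weightCount_zero, zero_mem_fibSet]
      rw [weightCount_succ]
      simp only [cons_false_mem_fibSet_iff, Set.ofPred_mem_eq]
      rw [(ih _).1, (ih k).2]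
      simp only [Nat.add_sub_add_right, succ_sub_choose_succ]
    · rcases k with _ | k
      · simp [weightCount_zero, cons_true_false_mem_fibSet]
      rw [weightCount_succ]
      simp only [Set.mem_ofPred_eq, cons_true_cons_mem_fibSet_iff, true_and, Bool.true_eq_false,
        false_and, Set.ofPred_mem_eq, Set.ofPred_false, (ih _).1]
      simp [weightCount]

lemma isLowerSet_lucasSet : IsLowerSet (lucasSet n) := by
  intro a b hba ha
  exact ⟨fun i j hj h => ha.1 i j hj ⟨hba i h.1, hba j h.2⟩,
    fun i j hi hj h => ha.2 i j hi hj ⟨hba i h.1, hba j h.2⟩⟩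

lemma cons_false_mem_lucasSet_iff (v : Fin m → Bool) :
    (Fin.cons false v : Fin (m + 1) → Bool) ∈ lucasSet (m + 1) ↔ v ∈ fibSet m := by
  rw [lucasSet, Set.mem_ofPred_eq, cons_false_mem_fibSet_iff, and_iff_left_iff_imp]
  intro _ i j hi _ h
  obtain rfl : i = 0 := Fin.ext hi
  simp at h

lemma cons_true_mem_lucasSet_iff (v : Fin (m + 1) → Bool) :
    (Fin.cons true v : Fin (m + 2) → Bool) ∈ lucasSet (m + 2) ↔
      (Fin.cons true v : Fin (m + 2) → Bool) ∈ fibSet (m + 2) ∧ v (Fin.last m) = false := by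
  refine and_congr_right fun _ => ⟨fun h => ?_, fun h i j hi hj => ?_⟩
  · simpa using h 0 (Fin.last (m + 1)) rfl rfl
  · obtain rfl : i = 0 := Fin.ext hi
    obtain rfl : j = Fin.last (m + 1) := Fin.ext hj
    simp [h]

lemma setOf_cons_true_mem_lucasSet :
    {v : Fin (m + 1) → Bool | Fin.cons true v ∈ lucasSet (m + 2)} =
      (Fin.snoc · false) '' {w : Fin m → Bool | Fin.cons true w ∈ fibSet (m + 1)} := by
  ext v
  simp only [Set.mem_ofPred_eq, Set.mem_image, cons_true_mem_lucasSet_iff]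
  constructor
  · rintro ⟨hv, hlast⟩
    have hv' : Fin.snoc (Fin.init v) false = v := by rw [← hlast, Fin.snoc_init_self]
    refine ⟨Fin.init v, ?_, hv'⟩
    rwa [← hv', Fin.cons_snoc_eq_snoc_cons, snoc_false_mem_fibSet_iff] at hv
  · rintro ⟨w, hw, rfl⟩
    rw [Fin.cons_snoc_eq_snoc_cons, snoc_false_mem_fibSet_iff]
    exact ⟨hw, Fin.snoc_last _ _⟩

lemma weightCount_lucasSet_succ (m k : ℕ) :
    weightCount (lucasSet (m + 2)) (k + 1) =
      weightCount (fibSet (m + 1)) (k + 1) +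
        weightCount {w : Fin m → Bool | Fin.cons true w ∈ fibSet (m + 1)} k := by
  rw [weightCount_succ, setOf_cons_true_mem_lucasSet,
    weightCount_image (Fin.snoc_left_injective (α := fun _ => Bool) false)
      fun w => by simp [weight_snoc]]
  simp only [cons_false_mem_lucasSet_iff, Set.ofPred_mem_eq]

theorem weightCount_lucasSet_add_choose (hn : 2 ≤ n) (k : ℕ) :
    weightCount (lucasSet n) k + (n - k - 1).choose k = 2 * (n - k).choose k := by
  obtain ⟨m, rfl⟩ := Nat.exists_eq_add_of_le' hn
  rcases k with _ | k
  · simp [weightCount_zero (zero_mem_lucasSet _)]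
  rw [weightCount_lucasSet_succ, (weightCount_fibSet_and_cons_true _ _).1,
    (weightCount_fibSet_and_cons_true _ _).2, show m + 1 + 1 - (k + 1) = m + 1 - k by omega,
    show m + 1 - k - 1 = m - k by omega, succ_sub_choose_succ]
  ring

lemma wCount_induce_lucasSet (hn : 2 ≤ n) (k : ℕ) :
    (wCount ((Qcube n).induce (lucasSet n)) ⟨fun _ => false, zero_mem_lucasSet n⟩ k : ℝ) =
      2 * ((n - k).choose k : ℝ) - ((n - k - 1).choose k : ℝ) := by
  rw [wCount_induce_eq_weightCount isLowerSet_lucasSet, eq_sub_iff_add_eq]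
  exact_mod_cast weightCount_lucasSet_add_choose hn k

end LucasCube

theorem W_polynomial_of_Lucas_cube (n : ℕ) (hn : 2 ≤ n) :
    (∀ k : ℕ,
      (wCount ((Qcube n).induce (lucasSet n)) ⟨fun _ => false, zero_mem_lucasSet n⟩ k : ℝ) =
        2 * ((n - k).choose k : ℝ) - ((n - k - 1).choose k : ℝ))
    ∧ ∀ x : ℝ,
      ∑ d ∈ Finset.range (2 ^ n + 1),
        (wCount ((Qcube n).induce (lucasSet n)) ⟨fun _ => false, zero_mem_lucasSet n⟩ d : ℝ)
          * x ^ d =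
      ∑ k ∈ Finset.range (n / 2 + 1),
        (2 * ((n - k).choose k : ℝ) - ((n - k - 1).choose k : ℝ)) * x ^ k := by
  refine ⟨LucasCube.wCount_induce_lucasSet hn, fun x => ?_⟩
  simp_rw [LucasCube.wCount_induce_lucasSet hn]
  have hrange : Finset.range (n / 2 + 1) ⊆ Finset.range (2 ^ n + 1) :=
    Finset.range_subset_range.mpr (by have := Nat.lt_two_pow_self (n := n); omega)
  refine (Finset.sum_subset hrange fun d _ hd => ?_).symm
  have hd : n - d < d := by simp at hd; omega
  simp [Nat.choose_eq_zero_of_lt hd, Nat.choose_eq_zero_of_lt (hd.trans_le' (Nat.sub_le _ 1))]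
end
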